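/- arXiv:math/0210284 — 8 statements merged into one kernel-verified Lean document; each statement's English description precedes it below -/
import Mathlib

section
/- With Q, Z, B as above, let W be the set of cycles γ in Q such that γ = ξα with ξ ∈ Z and no other subpath of γ belongs to Z (i.e., γ contains precisely one path of Z, located at its end). Then the complement of the image of the injection φ: Q_0 ⊙ B⁺ → Q_1 ⊙ B, (s, a_n...a_1) ↦ (a_n, a_{n-1}...a_1), consists exactly of the pairs (a, β) ∈ Q_1 ⊙ B with aβ ∈ W. Consequently |Q_1 ⊙ B| − |Q_0 ⊙ B| = |W| − |Q_0| when all sets are finite. -/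
/-!  Basic combinatorics of a quiver given by source/target maps `s t : A → V`.
A path of positive length is a list of arrows `[a₁, …, aₙ]` written in order of
traversal (so the written path `aₙ … a₁` of the paper corresponds to the list
`[a₁, …, aₙ]`).  -/

namespace Monomial

variable {V A : Type*}

/-- `l` is a path: consecutive arrows are composable. -/
def IsPath (s t : A → V) (l : List A) : Prop := l.Chain' fun a b => t a = s b

/-- Source of a (nonempty) path. -/
def srcOf (s : A → V) (l : List A) : Option V := l.head?.map s

/-- Target of a (nonempty) path. -/
def tgtOf (t : A → V) (l : List A) : Option V := l.getLast?.map t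

/-- `l` is a nontrivial cycle. -/
def IsCycleList (s t : A → V) (l : List A) : Prop :=
  l ≠ [] ∧ IsPath s t l ∧ tgtOf t l = srcOf s l

/-- `Z` is a minimal set of path relations of length at least two. -/
def MinimalRels (s t : A → V) (Z : Set (List A)) : Prop :=
  ∀ z ∈ Z, IsPath s t z ∧ 2 ≤ z.length ∧ ∀ w ∈ Z, w <:+: z → w = z

/-- `l` belongs to `B`: it is a path containing no subpath from `Z`
(the basis of the monomial algebra, positive length part). -/
def InB (s t : A → V) (Z : Set (List A)) (l : List A) : Prop :=
  IsPath s t l ∧ ∀ z ∈ Z, ¬ z <:+: l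

/-- `(a, β)` is a cyclic pair in `Q₁ ⊙ B` (if `β = []` it stands for the
trivial path at `s a = t a`). -/
def PairOK (s t : A → V) (Z : Set (List A)) (p : A × List A) : Prop :=
  InB s t Z p.2 ∧ IsCycleList s t (p.2 ++ [p.1])

/-- The set `W` of cycles containing precisely one subpath from `Z`,
located at their end (for a written cycle `γ = ξα`, the list is `α ++ ξ`). -/
def InW (s t : A → V) (Z : Set (List A)) (l : List A) : Prop :=
  IsCycleList s t l ∧
    ∃ ξ ∈ Z, (∃ α, l = α ++ ξ) ∧ ∀ z ∈ Z, ∀ p q, l = p ++ z ++ q → z = ξ ∧ q = []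

/-- Two cycles are in the same circuit iff they are related by rotation. -/
def RotEquiv (l₁ l₂ : List A) : Prop := ∃ n, l₁.rotate n = l₂

-- any infix of l ++ [a] is an infix of l or a suffix of l ++ [a]
lemma infix_concat_cases {z l : List A} {a : A} (h : z <:+: l ++ [a]) :
    z <:+: l ∨ z <:+ l ++ [a] := by
  obtain ⟨p, q, hpq⟩ := h
  rcases q.eq_nil_or_concat with rfl | ⟨q', b, rfl⟩
  · right; exact ⟨p, by simpa using hpq⟩
  · left
    have h2 : (p ++ z ++ q').concat b = l.concat a := by
      simpa [List.concat_eq_append, List.append_assoc] using hpq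
    obtain ⟨h3, _⟩ := List.concat_inj.mp h2
    exact ⟨p, q', by simp [h3, List.append_assoc]⟩

-- MAIN claim (A): if (a, β) is a cyclic pair and β++[a] is not in B, then β++[a] ∈ W
lemma mem_W_of_not_B {s t : A → V} {Z : Set (List A)} (hZ : MinimalRels s t Z)
    {a : A} {β : List A} (hβ : InB s t Z β)
    (hcyc : IsCycleList s t (β ++ [a])) (hnB : ¬ InB s t Z (β ++ [a])) :
    InW s t Z (β ++ [a]) := by
  have hpath : IsPath s t (β ++ [a]) := hcyc.2.1
  -- there is some z ∈ Z infix of β ++ [a]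
  have hex : ∃ z ∈ Z, z <:+: β ++ [a] := by
    by_contra h
    push_neg at h
    exact hnB ⟨hpath, h⟩
  obtain ⟨ξ, hξZ, hξinf⟩ := hex
  -- every Z-infix of β ++ [a] is a suffix
  have hsuf : ∀ z ∈ Z, z <:+: β ++ [a] → z <:+ β ++ [a] := fun z hz hinf => by
    rcases infix_concat_cases hinf with h | h
    · exact absurd h (hβ.2 z hz)
    · exact h
  have hξsuf := hsuf ξ hξZ hξinf
  obtain ⟨α, hα⟩ := hξsuf
  refine ⟨hcyc, ξ, hξZ, ⟨α, hα.symm⟩, ?_⟩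
  intro z hz p q hpq
  have hzinf : z <:+: β ++ [a] := ⟨p, q, hpq.symm⟩
  have hzsuf : z <:+ β ++ [a] := hsuf z hz hzinf
  have hzξ : z = ξ := by
    rcases List.suffix_or_suffix_of_suffix hzsuf ⟨α, hα⟩ with h | h
    · exact (hZ ξ hξZ).2.2 z hz h.isInfix
    · exact ((hZ z hz).2.2 ξ hξZ h.isInfix).symm
  refine ⟨hzξ, ?_⟩
  -- q = [] : z occurs as a suffix too, compare lengths in hpq
  obtain ⟨α', hα'⟩ := hzsuf
  -- β ++ [a] = p ++ z ++ q = α' ++ z ; use lengths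
  have hlen : (p ++ z ++ q).length = (α' ++ z).length := by
    rw [← hpq, hα']
  -- suppose q ≠ []
  rcases q.eq_nil_or_concat with rfl | ⟨q', b, rfl⟩
  · rfl
  · exfalso
    have h2 : (p ++ z ++ q').concat b = β.concat a := by
      simpa [List.concat_eq_append, List.append_assoc] using hpq.symm
    obtain ⟨h3, _⟩ := List.concat_inj.mp h2
    exact hβ.2 z hz ⟨p, q', by simp [h3, List.append_assoc]⟩

-- (B)/(C): if l ∈ W and l = β ++ [a] then (a, β) is a cyclic pair and l ∉ B
lemma pair_of_W {s t : A → V} {Z : Set (List A)} (hZ : MinimalRels s t Z)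
    {a : A} {β : List A} (hw : InW s t Z (β ++ [a])) :
    PairOK s t Z (a, β) ∧ ¬ InB s t Z (β ++ [a]) := by
  obtain ⟨hcyc, ξ, hξZ, ⟨α, hα⟩, huniq⟩ := hw
  constructor
  · refine ⟨⟨hcyc.2.1.prefix ⟨[a], rfl⟩, ?_⟩, hcyc⟩
    intro z hz hinf
    obtain ⟨p, q, hpq⟩ := hinf
    have := (huniq z hz p (q ++ [a]) (by rw [← List.append_assoc, show β = p ++ z ++ q from hpq.symm])).2
    simp at this
  · intro hB
    have : ξ ≠ [] := by
      intro h
      have := (hZ ξ hξZ).2.1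
      simp [h] at this
    exact hB.2 ξ hξZ (⟨α, [], by simp [hα]⟩)

end Monomial

open Monomial in
/-- the complement of the image of the injection
`φ : Q₀ ⊙ B⁺ → Q₁ ⊙ B`, `(s, aₙ…a₁) ↦ (aₙ, a_{n-1}…a₁)`, consists exactly of the
cyclic pairs `(a, β) ∈ Q₁ ⊙ B` with `aβ ∈ W`; consequently
`|Q₁ ⊙ B| − |Q₀ ⊙ B| = |W| − |Q₀|`.  (Note that `φ(l) = (a, β)` iff `l = βa`,
so the image of `φ` is `{(a, β) ∈ Q₁ ⊙ B : βa ∈ Q₀ ⊙ B⁺}`, and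
`|Q₀ ⊙ B| = |Q₀ ⊙ B⁺| + |Q₀|` since every vertex is a trivial cycle in `B`.) -/
theorem complement_of_phi_and_card {V A : Type*} [Fintype V] (s t : A → V)
    (Z : Set (List A)) (hZ : MinimalRels s t Z)
    (Dom : Set (List A)) (hDom : Dom = {l | IsCycleList s t l ∧ InB s t Z l})
    (Cod : Set (A × List A)) (hCod : Cod = {p | PairOK s t Z p})
    (Wset : Set (List A)) (hW : Wset = {l | InW s t Z l})
    (hDomFin : Dom.Finite) (hCodFin : Cod.Finite) (hWFin : Wset.Finite) :
    {p ∈ Cod | (p.2 ++ [p.1]) ∉ Dom} = {p ∈ Cod | (p.2 ++ [p.1]) ∈ Wset} ∧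
      (Cod.ncard : ℤ) - ((Dom.ncard : ℤ) + (Fintype.card V : ℤ)) =
        (Wset.ncard : ℤ) - (Fintype.card V : ℤ) := by
  set f : A × List A → List A := fun p => p.2 ++ [p.1] with hf
  have hfinj : Function.Injective f := by
    intro p q h
    simp only [hf, ← List.concat_eq_append] at h
    obtain ⟨h1, h2⟩ := List.concat_inj.mp h
    exact Prod.ext h2 h1
  -- the set equality
  have hEq : {p ∈ Cod | f p ∉ Dom} = {p ∈ Cod | f p ∈ Wset} := by
    ext p
    simp only [Set.mem_setOf_eq, hCod, hDom, hW, and_congr_right_iff]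
    intro hp
    obtain ⟨hβ, hcyc⟩ := hp
    constructor
    · intro hnd
      have hnB : ¬ InB s t Z (p.2 ++ [p.1]) := fun hB => hnd ⟨hcyc, hB⟩
      exact mem_W_of_not_B hZ hβ hcyc hnB
    · intro hw hd
      exact (pair_of_W hZ hw).2 hd.2
  refine ⟨hEq, ?_⟩
  -- cardinalities
  set S₁ := {p ∈ Cod | f p ∈ Dom} with hS₁
  set S₂ := {p ∈ Cod | f p ∉ Dom} with hS₂
  have hU : Cod = S₁ ∪ S₂ := by
    ext p; by_cases h : f p ∈ Dom <;> simp [hS₁, hS₂, h]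
  have hdisj : Disjoint S₁ S₂ := by
    rw [Set.disjoint_left]; rintro p ⟨_, h1⟩ ⟨_, h2⟩; exact h2 h1
  have hS₁fin : S₁.Finite := hCodFin.subset (Set.sep_subset _ _)
  have hS₂fin : S₂.Finite := hCodFin.subset (Set.sep_subset _ _)
  have him1 : f '' S₁ = Dom := by
    apply Set.Subset.antisymm
    · rintro l ⟨p, ⟨_, hd⟩, rfl⟩; exact hd
    · intro l hl
      have hlne : l ≠ [] := by rw [hDom] at hl; exact hl.1.1
      refine ⟨(l.getLast hlne, l.dropLast), ⟨?_, ?_⟩, ?_⟩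
      · rw [hCod]
        have hfp : f (l.getLast hlne, l.dropLast) = l :=
          List.dropLast_append_getLast hlne
        rw [hDom] at hl
        refine ⟨⟨hl.2.1.prefix (List.dropLast_prefix l), ?_⟩, ?_⟩
        · intro z hz hinf
          exact hl.2.2 z hz (hinf.trans (List.dropLast_prefix l).isInfix)
        · show IsCycleList s t (l.dropLast ++ [l.getLast hlne])
          rw [List.dropLast_append_getLast hlne]; exact hl.1
      · show l.dropLast ++ [l.getLast hlne] ∈ Dom
        rw [List.dropLast_append_getLast hlne]; exact hl
      · exact List.dropLast_append_getLast hlne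
  have him2 : f '' S₂ = Wset := by
    apply Set.Subset.antisymm
    · rintro l ⟨p, hp, rfl⟩
      rw [hEq] at hp
      exact hp.2
    · intro l hl
      have hw : InW s t Z l := by rwa [hW] at hl
      have hlne : l ≠ [] := hw.1.1
      have hfp : f (l.getLast hlne, l.dropLast) = l :=
        List.dropLast_append_getLast hlne
      refine ⟨(l.getLast hlne, l.dropLast), ?_, hfp⟩
      have hw' : InW s t Z (l.dropLast ++ [l.getLast hlne]) := by
        rw [List.dropLast_append_getLast hlne]; exact hw
      obtain ⟨hpOK, hnB⟩ := pair_of_W hZ hw'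
      refine ⟨by rw [hCod]; exact hpOK, ?_⟩
      intro hd
      rw [hDom, hfp] at hd
      apply hnB
      show InB s t Z (l.dropLast ++ [l.getLast hlne])
      rw [List.dropLast_append_getLast hlne]
      exact hd.2
  have hc1 : S₁.ncard = Dom.ncard := by
    rw [← him1, Set.ncard_image_of_injective _ hfinj]
  have hc2 : S₂.ncard = Wset.ncard := by
    rw [← him2, Set.ncard_image_of_injective _ hfinj]
  have hcard : Cod.ncard = Dom.ncard + Wset.ncard := by
    rw [hU, Set.ncard_union_eq hdisj hS₁fin hS₂fin, hc1, hc2]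
  rw [hcard]
  push_cast
  ring
end

section
/- With Q, Z, B, W as above, if a pair (a, β) ∈ Q_1 ⊙ B satisfies aβ ∉ B, then aβ contains exactly one subpath belonging to Z, and that subpath is located at the end of aβ (its last arrow is a); hence aβ ∈ W. -/
open Monomial in
/-- if `(a, β) ∈ Q₁ ⊙ B` and the cycle `aβ` (the list `β ++ [a]`) is
not in `B`, then `aβ` contains exactly one subpath from `Z`, located at its end,
i.e. `aβ ∈ W`; moreover the last arrow of that subpath is `a`. -/
theorem not_inB_mem_W {V A : Type*} (s t : A → V) (Z : Set (List A))
    (hZ : MinimalRels s t Z) (a : A) (β : List A)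
    (hp : PairOK s t Z (a, β)) (hnB : ¬ InB s t Z (β ++ [a])) :
    InW s t Z (β ++ [a]) ∧
      ∀ ξ ∈ Z, (∃ α, β ++ [a] = α ++ ξ) → ξ.getLast? = some a := by

  obtain ⟨hB, hcyc⟩ := hp
  have hpath : IsPath s t (β ++ [a]) := hcyc.2.1
  have hex : ∃ z ∈ Z, z <:+: β ++ [a] := by
    by_contra h
    push_neg at h
    exact hnB ⟨hpath, h⟩
  obtain ⟨z, hzZ, hzinf⟩ := hex
  -- any infix occurrence of an element of Z in β ++ [a] is a suffix
  have key : ∀ w ∈ Z, ∀ p q, β ++ [a] = p ++ w ++ q → w <:+ (β ++ [a]) ∧ q = [] := by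
    intro w hwZ p q hpq
    rcases q.eq_nil_or_concat with rfl | ⟨q', a', rfl⟩
    · exact ⟨⟨p, by simpa using hpq.symm⟩, rfl⟩
    · exfalso
      have h1 : β ++ [a] = (p ++ w ++ q') ++ [a'] := by
        rw [hpq]; simp
      have h2 := List.append_inj' h1 rfl
      exact hB.2 w hwZ ⟨p, q', h2.1.symm⟩
  obtain ⟨p0, q0, hz0⟩ := hzinf
  obtain ⟨hzsuf, hq0⟩ := key z hzZ p0 q0 hz0.symm
  have huniq : ∀ w ∈ Z, ∀ p q, β ++ [a] = p ++ w ++ q → w = z ∧ q = [] := by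
    intro w hwZ p q hpq
    obtain ⟨hwsuf, hq⟩ := key w hwZ p q hpq
    refine ⟨?_, hq⟩
    rcases List.suffix_or_suffix_of_suffix hwsuf hzsuf with h | h
    · exact (hZ z hzZ).2.2 w hwZ h.isInfix
    · exact ((hZ w hwZ).2.2 z hzZ h.isInfix).symm
  have hlast : ∀ ξ ∈ Z, (∃ α, β ++ [a] = α ++ ξ) → ξ.getLast? = some a := by
    intro ξ hξ ⟨α, hα⟩
    have hne : ξ ≠ [] := by
      intro h
      have := (hZ ξ hξ).2.1
      simp [h] at this
    have : (α ++ ξ).getLast? = ξ.getLast? := List.getLast?_append_of_ne_nil _ hne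
    rw [← hα] at this
    rw [← this]
    simp
  refine ⟨⟨hcyc, z, hzZ, ⟨p0, by rw [← hz0, hq0]; simp⟩, huniq⟩, hlast⟩
end

section
/- For every circuit C of the quiver Q (an equivalence class of cycles under rotation), the restricted difference formula holds: if C is a non-trivial circuit then |(Q_1 ⊙ B)_C| − |(Q_0 ⊙ B)_C| = w_C, where w_C = |W ∩ C|. -/
/-!
Closing up a pair into a cycle, `(a, β) ↦ β ++ [a]`, identifies the cyclic pairs of `Q₁ ⊙ B` in `C`
with the cycles of `C` whose initial part `β` avoids `Z`. Such a cycle either avoids `Z`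
altogether, giving a cyclic pair of `Q₀ ⊙ B`, or every subpath from `Z` ends at its last arrow;
by minimality of `Z` there is then only one such subpath, i.e. the cycle lies in `W`.
-/

namespace Monomial

variable {V A : Type*} {s t : A → V} {Z : Set (List A)}

lemma concat_injective : Function.Injective fun p : A × List A => p.2 ++ [p.1] := by
  rintro ⟨a, β⟩ ⟨a', β'⟩ h
  obtain ⟨rfl, ⟨⟩⟩ := List.append_inj' h rfl
  rfl

lemma eq_nil_of_not_infix_dropLast {l z p q : List A} (hz : ¬ z <:+: l.dropLast)
    (hl : l = p ++ z ++ q) : q = [] := by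
  by_contra hq
  exact hz ⟨p, q.dropLast, by rw [hl, List.dropLast_append_of_ne_nil hq, List.append_assoc]⟩

lemma MinimalRels.eq_of_suffix (hZ : MinimalRels s t Z) {z z' l : List A}
    (hz : z ∈ Z) (hz' : z' ∈ Z) (h : z <:+ l) (h' : z' <:+ l) : z = z' := by
  rcases List.suffix_or_suffix_of_suffix h h' with hzz' | hz'z
  · exact (hZ z' hz').2.2 z hz hzz'.isInfix
  · exact ((hZ z hz).2.2 z' hz' hz'z.isInfix).symm

lemma InW.not_inB {l : List A} (hl : InW s t Z l) : ¬ InB s t Z l := by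
  obtain ⟨-, ξ, hξ, ⟨α, rfl⟩, -⟩ := hl
  exact fun hB => hB.2 ξ hξ (List.suffix_append α ξ).isInfix

lemma InW.not_infix_dropLast {l : List A} (hl : InW s t Z l) :
    ∀ z ∈ Z, ¬ z <:+: l.dropLast := by
  obtain ⟨⟨hne, -⟩, _, -, -, huniq⟩ := hl
  rintro z hz ⟨p, q, hpq⟩
  have hl : l = p ++ z ++ (q ++ [l.getLast hne]) := by
    rw [← List.append_assoc, hpq, List.dropLast_append_getLast]
  simpa using (huniq z hz p _ hl).2

lemma inB_or_inW_of_not_infix_dropLast (hZ : MinimalRels s t Z) {l : List A}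
    (hl : IsCycleList s t l) (havoid : ∀ z ∈ Z, ¬ z <:+: l.dropLast) :
    InB s t Z l ∨ InW s t Z l := by
  by_cases hB : ∀ z ∈ Z, ¬ z <:+: l
  · exact Or.inl ⟨hl.2.1, hB⟩
  push Not at hB
  obtain ⟨ξ, hξ, p, q, hpq⟩ := hB
  obtain rfl := eq_nil_of_not_infix_dropLast (havoid ξ hξ) hpq.symm
  rw [List.append_nil] at hpq
  refine Or.inr ⟨hl, ξ, hξ, ⟨p, hpq.symm⟩, fun z hz p' q' hl' => ?_⟩
  obtain rfl := eq_nil_of_not_infix_dropLast (havoid z hz) hl'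
  rw [List.append_nil] at hl'
  exact ⟨hZ.eq_of_suffix hz hξ ⟨p', hl'.symm⟩ ⟨p, hpq⟩, rfl⟩

lemma not_infix_dropLast_iff (hZ : MinimalRels s t Z) {l : List A} (hl : IsCycleList s t l) :
    (∀ z ∈ Z, ¬ z <:+: l.dropLast) ↔ InB s t Z l ∨ InW s t Z l := by
  refine ⟨inB_or_inW_of_not_infix_dropLast hZ hl, ?_⟩
  rintro (hB | hW)
  · exact fun z hz hinf => hB.2 z hz (hinf.trans l.dropLast_prefix.isInfix)
  · exact hW.not_infix_dropLast

lemma image_concat_pairOK (P : List A → Prop) :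
    (fun p : A × List A => p.2 ++ [p.1]) '' {p | PairOK s t Z p ∧ P (p.2 ++ [p.1])} =
      {l | IsCycleList s t l ∧ (∀ z ∈ Z, ¬ z <:+: l.dropLast) ∧ P l} := by
  ext l
  constructor
  · rintro ⟨⟨a, β⟩, ⟨⟨hβ, hcyc⟩, hP⟩, rfl⟩
    exact ⟨hcyc, by simpa using hβ.2, hP⟩
  · rintro ⟨hcyc, havoid, hP⟩
    have hsplit := List.dropLast_append_getLast hcyc.1
    refine ⟨(l.getLast hcyc.1, l.dropLast), ⟨⟨⟨?_, havoid⟩, ?_⟩, ?_⟩, hsplit⟩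
    · exact hcyc.2.1.prefix l.dropLast_prefix
    · simpa only [hsplit] using hcyc
    · simpa only [hsplit] using hP

lemma setOf_not_infix_dropLast_eq_union (hZ : MinimalRels s t Z) (P : List A → Prop) :
    {l | IsCycleList s t l ∧ (∀ z ∈ Z, ¬ z <:+: l.dropLast) ∧ P l} =
      {l | IsCycleList s t l ∧ InB s t Z l ∧ P l} ∪ {l | InW s t Z l ∧ P l} := by
  ext l
  constructor
  · rintro ⟨hcyc, havoid, hP⟩
    exact ((not_infix_dropLast_iff hZ hcyc).1 havoid).imp (⟨hcyc, ·, hP⟩) (⟨·, hP⟩)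
  · rintro (⟨hcyc, hB, hP⟩ | ⟨hW, hP⟩)
    · exact ⟨hcyc, (not_infix_dropLast_iff hZ hcyc).2 (.inl hB), hP⟩
    · exact ⟨hW.1, (not_infix_dropLast_iff hZ hW.1).2 (.inr hW), hP⟩

end Monomial

open Monomial in
theorem circuit_difference_general {V A : Type*} (s t : A → V) (Z : Set (List A))
    (hZ : MinimalRels s t Z) (γ : List A)
    (DomC : Set (List A))
    (hDomC : DomC = {l | IsCycleList s t l ∧ InB s t Z l ∧ RotEquiv l γ})
    (CodC : Set (A × List A))
    (hCodC : CodC = {p | PairOK s t Z p ∧ RotEquiv (p.2 ++ [p.1]) γ})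
    (WC : Set (List A))
    (hWC : WC = {l | InW s t Z l ∧ RotEquiv l γ})
    (hDomFin : DomC.Finite) (hWFin : WC.Finite) :
    CodC.ncard = DomC.ncard + WC.ncard := by
  have hsplit : (fun p : A × List A => p.2 ++ [p.1]) '' CodC = DomC ∪ WC := by
    rw [hCodC, image_concat_pairOK (RotEquiv · γ), setOf_not_infix_dropLast_eq_union hZ, hDomC,
      hWC]
  have hdisj : Disjoint DomC WC := by
    rw [hDomC, hWC, Set.disjoint_left]
    exact fun l hl hW => hW.1.not_inB hl.2.1
  rw [← Set.ncard_image_of_injective CodC concat_injective, hsplit,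
    Set.ncard_union_eq hdisj hDomFin hWFin]

open Monomial in
/-- for every non-trivial circuit `C` (the rotation class of a
nontrivial cycle `γ`) we have `|(Q₁ ⊙ B)_C| − |(Q₀ ⊙ B)_C| = w_C = |W ∩ C|`
(stated additively to avoid truncated subtraction). -/
theorem circuit_difference {V A : Type*} (s t : A → V) (Z : Set (List A))
    (hZ : MinimalRels s t Z) (γ : List A) (hγ : IsCycleList s t γ)
    (DomC : Set (List A))
    (hDomC : DomC = {l | IsCycleList s t l ∧ InB s t Z l ∧ RotEquiv l γ})
    (CodC : Set (A × List A))
    (hCodC : CodC = {p | PairOK s t Z p ∧ RotEquiv (p.2 ++ [p.1]) γ})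
    (WC : Set (List A))
    (hWC : WC = {l | InW s t Z l ∧ RotEquiv l γ})
    (hDomFin : DomC.Finite) (hCodFin : CodC.Finite) (hWFin : WC.Finite) :
    CodC.ncard = DomC.ncard + WC.ncard :=
  circuit_difference_general s t Z hZ γ DomC hDomC CodC hCodC WC hWC hDomFin hWFin
end

section
/- Let C be a circuit of the quiver Q with multiplicity m (so every cycle in C has length n = l·m where l is the period). Fix a cycle γ = a_n...a_1 in C and set K_C = Σ_{i=1}^n (a_i, a_i^{co}) in the vector space k(Q_1 ⊙ B)_C, with the convention that a summand is zero when a_i^{co} ∉ B. Let Δ_C = Σ_{(a,β) ∈ (Q_1 ⊙ B)_C} (a,β). Then K_C = m · Δ_C. -/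
namespace Monomial

open Finsupp Classical




variable {V A : Type*} {k : Type*} [Field k]

/-- The basis vector of `k(Q₁ ⊙ B)` given by an arrow of a cycle `l` together
with its complement: for the cycle `l = [a₁, …, aₙ]` and index `j`,
this is the pair `(a_{j+1}, a_{j+1}^{co})`, where `a_{j+1}^{co}` is the
complementary path of the arrow `a_{j+1}` in the cycle; by convention it is `0`
when the complement is not in `B`. -/
noncomputable def bAt (s t : A → V) (Z : Set (List A)) (k : Type*) [Field k]
    (l : List A) (j : ℕ) : (A × List A) →₀ k :=
  match (l.rotate (j + 1)).getLast? with
  | none => 0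
  | Option.some a =>
      if InB s t Z ((l.rotate (j + 1)).dropLast) then
        Finsupp.single (a, (l.rotate (j + 1)).dropLast) 1
      else 0

/-- The canonical element `K_C = Σᵢ (aᵢ, aᵢ^{co})` attached to a cycle `γ`. -/
noncomputable def KElt (s t : A → V) (Z : Set (List A)) (k : Type*) [Field k]
    (γ : List A) : (A × List A) →₀ k :=
  ∑ j ∈ Finset.range γ.length, bAt s t Z k γ j

/-- Value of the differential `d₀` on a basis element `(a, β)`:
`d₀(a,β) = (t a, aβ) − (s a, βa)`, where summands whose second component is a
zero path are interpreted as `0` (the vertex component is determined by the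
cycle, so is omitted). -/
noncomputable def d0b (s t : A → V) (Z : Set (List A)) (k : Type*) [Field k]
    (p : A × List A) : List A →₀ k :=
  (if InB s t Z (p.2 ++ [p.1]) then Finsupp.single (p.2 ++ [p.1]) (1 : k) else 0)
    - (if InB s t Z (p.1 :: p.2) then Finsupp.single (p.1 :: p.2) (1 : k) else 0)

/-- The differential `d₀ : k(Q₁ ⊙ B) → k(Q₀ ⊙ B)`. -/
noncomputable def d0map (s t : A → V) (Z : Set (List A)) {k : Type*} [Field k]
    (f : (A × List A) →₀ k) : List A →₀ k :=
  f.sum fun p c => c • d0b s t Z k p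

/-- Value of the differential `d₁` on a basis element `(α, β) ∈ Z ⊙ B`:
for `α = aₙ … a₁` this is `Σᵢ (aᵢ, a_{i-1} … a₁ β aₙ … a_{i+1})`,
with summands whose second component is a zero path interpreted as `0`. -/
noncomputable def d1b (s t : A → V) (Z : Set (List A)) (k : Type*) [Field k]
    (α β : List A) : (A × List A) →₀ k :=
  ∑ j ∈ Finset.range α.length, bAt s t Z k (β ++ α) (β.length + j)

/-- The differential `d₁ : k(Z ⊙ B) → k(Q₁ ⊙ B)`. -/
noncomputable def d1map (s t : A → V) (Z : Set (List A)) {k : Type*} [Field k]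
    (g : (List A × List A) →₀ k) : (A × List A) →₀ k :=
  g.sum fun q c => c • d1b s t Z k q.1 q.2

/-- `(α, β)` is a cyclic pair in `Z ⊙ B`. -/
def ZPairOK (s t : A → V) (Z : Set (List A)) (q : List A × List A) : Prop :=
  q.1 ∈ Z ∧ InB s t Z q.2 ∧ IsCycleList s t (q.2 ++ q.1)

end Monomial

/-! The summand of `K_C` at index `j` depends only on the rotation `γ.rotate (j + 1)`, whose last
arrow is `a_{j+1}` and whose remaining arrows form `a_{j+1}^{co}`. Since `γ.rotate` is periodic
with period `l`, the `n = l·m` summands are `m` copies of the first `l`. By minimality of `l` these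
`l` rotations are pairwise distinct, and they are all the cycles of the circuit `C`; hence the
nonzero ones among the first `l` summands run over `(Q₁ ⊙ B)_C` exactly once, which is `Δ_C`. -/

theorem Function.Periodic.sum_range_mul {M : Type*} [AddCommMonoid M] {f : ℕ → M}
    {l : ℕ} (hf : Function.Periodic f l) (m : ℕ) :
    ∑ j ∈ Finset.range (l * m), f j = m • ∑ j ∈ Finset.range l, f j := by
  induction m with
  | zero => simp
  | succ m ih =>
    rw [Nat.mul_succ, Finset.sum_range_add, ih, succ_nsmul]
    congr 1
    refine Finset.sum_congr rfl fun j _ => ?_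
    rw [add_comm, mul_comm]
    exact hf.nat_mul m j

namespace Monomial

variable {V A : Type*}

theorem isCycleList_iff_cycle_chain {s t : A → V} {c : List A} (hc : c ≠ []) :
    IsCycleList s t c ↔ Cycle.Chain (fun a b => t a = s b) (c : Cycle A) := by
  obtain ⟨x, xs, rfl⟩ := List.exists_cons_of_ne_nil hc
  rw [Cycle.chain_ne_nil _ hc, List.isChain_cons_cons]
  simp only [IsCycleList, IsPath, tgtOf, srcOf, List.getLast?_eq_some_getLast hc, ne_eq,
    reduceCtorEq, not_false_eq_true, true_and, Option.map_some, List.head?_cons,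
    Option.some.injEq]
  exact and_comm

theorem IsCycleList.rotate {s t : A → V} {c : List A} (h : IsCycleList s t c) (n : ℕ) :
    IsCycleList s t (c.rotate n) := by
  have hc : c.rotate n ≠ [] := by simpa using h.1
  rw [isCycleList_iff_cycle_chain hc, Cycle.coe_eq_coe.2 (List.IsRotated.forall c n)]
  exact (isCycleList_iff_cycle_chain h.1).1 h

section Rotation

variable {γ : List A} {l : ℕ}

theorem rotate_periodic (hrot : γ.rotate l = γ) : Function.Periodic γ.rotate l := fun x => by
  rw [add_comm, ← List.rotate_rotate, hrot]

theorem exists_lt_rotate_succ_eq (hl : 0 < l) (hrot : γ.rotate l = γ) (n : ℕ) :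
    ∃ r < l, γ.rotate (r + 1) = γ.rotate n := by
  refine ⟨(n + (l - 1)) % l, Nat.mod_lt _ hl, ?_⟩
  have hp := rotate_periodic hrot
  calc γ.rotate ((n + (l - 1)) % l + 1)
      = γ.rotate ((n + (l - 1)) % l + 1 + (n + (l - 1)) / l * l) :=
        ((hp.nat_mul _) _).symm
    _ = γ.rotate (n + l) := by
        congr 1
        have := Nat.mod_add_div' (n + (l - 1)) l
        omega
    _ = γ.rotate n := hp n

theorem injOn_rotate_succ (hmin : ∀ j, 0 < j → j < l → γ.rotate j ≠ γ) :
    (Set.Iio l).InjOn fun r => γ.rotate (r + 1) := by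
  suffices ∀ a b, a ≤ b → b < l → γ.rotate (a + 1) = γ.rotate (b + 1) → a = b from
    fun a ha b hb h => (le_total a b).elim (fun hab => this a b hab hb h)
      (fun hba => (this b a hba ha h.symm).symm)
  intro a b hab hb h
  have hback : γ.rotate (b - a) = γ := by
    rw [← List.rotate_eq_rotate (n := a + 1), List.rotate_rotate, h]
    congr 1
    omega
  by_contra hne
  exact hmin (b - a) (by omega) (by omega) hback

variable (hγ : γ ≠ [])

/-- `coPair hγ r` is the cyclic pair `(a_{r+1}, a_{r+1}^{co})` of the cycle `γ`. -/
def coPair (r : ℕ) : A × List A :=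
  ((γ.rotate (r + 1)).getLast (by simpa using hγ), (γ.rotate (r + 1)).dropLast)

theorem coPair_eq_iff {r : ℕ} {p : A × List A} :
    coPair hγ r = p ↔ γ.rotate (r + 1) = p.2 ++ [p.1] := by
  constructor
  · rintro rfl
    exact (List.dropLast_append_getLast _).symm
  · intro h
    simp only [coPair, h, List.getLast_append_singleton, List.dropLast_concat]

theorem rotate_succ_eq_coPair (r : ℕ) :
    γ.rotate (r + 1) = (coPair hγ r).2 ++ [(coPair hγ r).1] :=
  (coPair_eq_iff hγ).1 rfl

theorem injOn_coPair (hmin : ∀ j, 0 < j → j < l → γ.rotate j ≠ γ) :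
    (Set.Iio l).InjOn (coPair hγ) := fun a ha b hb h =>
  injOn_rotate_succ hmin ha hb (by simp only [rotate_succ_eq_coPair hγ, h])

end Rotation

variable {k : Type*} [Field k] {s t : A → V} {Z : Set (List A)} {γ : List A} {l : ℕ}

theorem bAt_periodic (hrot : γ.rotate l = γ) : Function.Periodic (bAt s t Z k γ) l := by
  intro j
  unfold bAt
  rw [add_right_comm, rotate_periodic hrot]

open Classical in
theorem bAt_eq_ite (hγ : γ ≠ []) (j : ℕ) :
    bAt s t Z k γ j =
      if InB s t Z (coPair hγ j).2 then Finsupp.single (coPair hγ j) 1 else 0 := by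
  unfold bAt coPair
  rw [List.getLast?_eq_some_getLast]

theorem pairOK_rotEquiv_iff (hγ : IsCycleList s t γ) (hl : 0 < l) (hrot : γ.rotate l = γ)
    {p : A × List A} :
    PairOK s t Z p ∧ RotEquiv (p.2 ++ [p.1]) γ ↔
      ∃ r < l, InB s t Z (coPair hγ.1 r).2 ∧ coPair hγ.1 r = p := by
  constructor
  · rintro ⟨⟨hB, -⟩, hrotEq⟩
    obtain ⟨n, hn⟩ := List.IsRotated.symm hrotEq
    obtain ⟨r, hr, hrn⟩ := exists_lt_rotate_succ_eq hl hrot n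
    have hpair : coPair hγ.1 r = p := (coPair_eq_iff hγ.1).2 (hrn.trans hn)
    exact ⟨r, hr, hpair ▸ hB, hpair⟩
  · rintro ⟨r, -, hB, rfl⟩
    have hcycle := rotate_succ_eq_coPair hγ.1 r
    refine ⟨⟨hB, hcycle ▸ hγ.rotate (r + 1)⟩, ?_⟩
    rw [← hcycle]
    exact List.IsRotated.forall γ (r + 1)

end Monomial

open Monomial in
theorem K_eq_mult_smul_Delta_general {V A : Type*} {k : Type*} [Field k]
    (s t : A → V) (Z : Set (List A))
    (γ : List A) (hγ : IsCycleList s t γ)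
    (l m : ℕ) (hl : 0 < l) (hrot : γ.rotate l = γ)
    (hmin : ∀ j, 0 < j → j < l → γ.rotate j ≠ γ)
    (hm : γ.length = l * m)
    (CodC : Set (A × List A))
    (hCodC : CodC = {p | PairOK s t Z p ∧ RotEquiv (p.2 ++ [p.1]) γ})
    (hfin : CodC.Finite) :
    KElt s t Z k γ = (m : k) • ∑ p ∈ hfin.toFinset, Finsupp.single p (1 : k) := by
  classical
  subst hCodC
  have hCodC_image : hfin.toFinset =
      {r ∈ Finset.range l | InB s t Z (coPair hγ.1 r).2}.image (coPair hγ.1) := by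
    ext p
    simp [pairOK_rotEquiv_iff hγ hl hrot, and_assoc]
  rw [KElt, hm, (bAt_periodic hrot).sum_range_mul, hCodC_image,
    Finset.sum_image ((injOn_coPair hγ.1 hmin).mono fun r hr =>
      Finset.mem_range.1 (Finset.mem_filter.1 hr).1), Finset.sum_filter,
    Nat.cast_smul_eq_nsmul]
  simp_rw [bAt_eq_ite hγ.1]

open Monomial in
/-- if the circuit of the cycle `γ` has period `l` and multiplicity
`m` (so `γ` has length `n = l·m`), then `K_C = m • Δ_C`, where
`Δ_C` is the sum of all basis vectors of `k(Q₁ ⊙ B)_C`. -/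
theorem K_eq_mult_smul_Delta {V A : Type*} {k : Type*} [Field k]
    (s t : A → V) (Z : Set (List A)) (hZ : MinimalRels s t Z)
    (γ : List A) (hγ : IsCycleList s t γ)
    (l m : ℕ) (hl : 0 < l) (hrot : γ.rotate l = γ)
    (hmin : ∀ j, 0 < j → j < l → γ.rotate j ≠ γ)
    (hm : γ.length = l * m)
    (CodC : Set (A × List A))
    (hCodC : CodC = {p | PairOK s t Z p ∧ RotEquiv (p.2 ++ [p.1]) γ})
    (hfin : CodC.Finite) :
    KElt s t Z k γ = (m : k) • ∑ p ∈ hfin.toFinset, Finsupp.single p (1 : k) :=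
  K_eq_mult_smul_Delta_general s t Z γ hγ l m hl hrot hmin hm CodC hCodC hfin
end

section
/- Let A = kQ/<Z> be a finite-dimensional monomial algebra with Q finite and connected, and let d_0: k(Q_1 ⊙ B) → k(Q_0 ⊙ B) be given by d_0(a,β) = (t(a), aβ) − (s(a), βa), where pairs whose second component is a zero path are interpreted as 0. Then for every circuit C that is useful ((Q_1 ⊙ B)_C ≠ ∅) but not strong (some cycle of C is a zero path), the restricted map d_{0,C}: k(Q_1 ⊙ B)_C → k(Q_0 ⊙ B)_C is surjective. -/
/-!
Rotating a cycle `a :: r` of `B` by one arrow gives `d₀(a, r) = (r ++ [a]) - (a :: r)`, where the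
first term is `0` when `r ++ [a]` is a zero path. Since some rotation of every cycle of the
circuit is a zero path, rotating step by step writes each cycle of `B` in the circuit as a
telescoping sum of values of `d₀` on pairs of the circuit.
-/

namespace Monomial

variable {V A : Type*} {s t : A → V} {Z : Set (List A)} {k : Type*} [Field k]

lemma IsCycleList.rotate_one {a : A} {r : List A} (h : IsCycleList s t (a :: r)) :
    IsCycleList s t (r ++ [a]) := by
  obtain ⟨-, hch, hts⟩ := h
  have hch' := List.isChain_cons.mp hch
  refine ⟨by simp, ?_, ?_⟩
  · refine List.isChain_append.mpr ⟨hch'.2, List.isChain_singleton a, ?_⟩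
    intro x hx y hy
    simp only [List.head?_cons, Option.mem_def, Option.some.injEq] at hy
    subst hy
    have hx' : (a :: r).getLast? = some x := by
      cases r with
      | nil => simp at hx
      | cons b r' => rw [List.getLast?_cons_cons]; exact hx
    simpa [tgtOf, srcOf, hx'] using hts
  · cases r with
    | nil => simpa [tgtOf, srcOf] using hts
    | cons b r' =>
      have hgl : (b :: (r' ++ [a])).getLast? = some a := by
        rw [← List.cons_append]; exact List.getLast?_concat
      simpa [tgtOf, srcOf, hgl] using hch'.1 b (by simp)

lemma InB.of_infix {l w : List A} (h : InB s t Z l) (hw : w <:+: l) : InB s t Z w :=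
  ⟨List.IsChain.infix h.1 hw, fun z hz hzi => h.2 z hz (hzi.trans hw)⟩

lemma d0map_eq_linearCombination (f : (A × List A) →₀ k) :
    d0map s t Z f = Finsupp.linearCombination k (d0b s t Z k) f :=
  (Finsupp.linearCombination_apply k f).symm

open Classical in
lemma d0b_of_inB_cons {a : A} {r : List A} (hB : InB s t Z (a :: r)) :
    d0b s t Z k (a, r) =
      (if InB s t Z (r ++ [a]) then Finsupp.single (r ++ [a]) 1 else 0) -
        Finsupp.single (a :: r) 1 := by
  simp [d0b, hB]

variable (s t Z k) in
/-- The image of `d_{0,C}` for the circuit `C` of `γ`. -/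
noncomputable def d0CircuitRange (γ : List A) : Submodule k (List A →₀ k) :=
  (Finsupp.supported k k {p : A × List A | PairOK s t Z p ∧ RotEquiv (p.2 ++ [p.1]) γ}).map
    (Finsupp.linearCombination k (d0b s t Z k))

lemma d0b_mem_d0CircuitRange {γ : List A} {p : A × List A} (hp : PairOK s t Z p)
    (hpγ : RotEquiv (p.2 ++ [p.1]) γ) : d0b s t Z k p ∈ d0CircuitRange s t Z k γ := by
  refine ⟨Finsupp.single p 1, Finsupp.single_mem_supported k 1 ⟨hp, hpγ⟩, ?_⟩
  simp only [Finsupp.linearCombination_single, one_smul]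

lemma single_mem_d0CircuitRange_of_not_inB_rotate {γ : List A} (m : ℕ) :
    ∀ {l : List A}, IsCycleList s t l → InB s t Z l → RotEquiv l γ →
      ¬ InB s t Z (l.rotate m) → Finsupp.single l 1 ∈ d0CircuitRange s t Z k γ := by
  induction m with
  | zero => intro l _ hB _ hn; exact absurd (by simpa using hB) hn
  | succ m ih =>
    intro l hcyc hB hlγ hn
    obtain ⟨a, r, rfl⟩ := List.exists_cons_of_ne_nil hcyc.1
    have hrot : (a :: r).rotate 1 = r ++ [a] := by simp
    have hrγ : RotEquiv (r ++ [a]) γ := hrot ▸ (List.IsRotated.forall _ 1).trans hlγ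
    have hpair : PairOK s t Z (a, r) :=
      ⟨hB.of_infix (List.suffix_cons a r).isInfix, hcyc.rotate_one⟩
    have hd0 : d0b s t Z k (a, r) ∈ d0CircuitRange s t Z k γ := d0b_mem_d0CircuitRange hpair hrγ
    rw [d0b_of_inB_cons hB] at hd0
    split_ifs at hd0 with hrB
    · have hnr : ¬ InB s t Z ((r ++ [a]).rotate m) := by
        rwa [← List.rotate_cons_succ]
      simpa using sub_mem (ih hcyc.rotate_one hrB hrγ hnr) hd0
    · simpa using neg_mem hd0

lemma supported_le_d0CircuitRange {γ : List A}
    (hnotstrong : ∃ l, RotEquiv l γ ∧ ¬ InB s t Z l) :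
    Finsupp.supported k k {l | IsCycleList s t l ∧ InB s t Z l ∧ RotEquiv l γ} ≤
      d0CircuitRange s t Z k γ := by
  obtain ⟨l₀, hl₀γ, hl₀B⟩ := hnotstrong
  rw [Finsupp.supported_eq_span_single, Submodule.span_le]
  rintro _ ⟨l, ⟨hcyc, hB, hlγ⟩, rfl⟩
  obtain ⟨m, hm⟩ : RotEquiv l l₀ := List.IsRotated.trans hlγ (List.IsRotated.symm hl₀γ)
  exact single_mem_d0CircuitRange_of_not_inB_rotate m hcyc hB hlγ (hm ▸ hl₀B)

end Monomial

open Monomial in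
theorem d0_restricted_surjective_general {V A : Type*} {k : Type*} [Field k]
    (s t : A → V) (Z : Set (List A)) (γ : List A)
    (hnotstrong : ∃ l, RotEquiv l γ ∧ ¬ InB s t Z l) :
    ∀ g : List A →₀ k,
      (∀ l ∈ g.support, IsCycleList s t l ∧ InB s t Z l ∧ RotEquiv l γ) →
      ∃ f : (A × List A) →₀ k,
        (∀ p ∈ f.support, PairOK s t Z p ∧ RotEquiv (p.2 ++ [p.1]) γ) ∧
          d0map s t Z f = g := by
  intro g hg
  obtain ⟨f, hf, rfl⟩ :=
    supported_le_d0CircuitRange hnotstrong ((Finsupp.mem_supported k g).mpr hg)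
  exact ⟨f, hf, d0map_eq_linearCombination f⟩

open Monomial in
/-- if the circuit `C` of the cycle `γ` is useful
(`(Q₁ ⊙ B)_C ≠ ∅`) but not strong (some cycle of `C` is a zero path), then the
restriction `d_{0,C} : k(Q₁ ⊙ B)_C → k(Q₀ ⊙ B)_C` of
`d₀(a,β) = (t a, aβ) − (s a, βa)` is surjective. -/
theorem d0_restricted_surjective {V A : Type*} {k : Type*} [Field k]
    (s t : A → V) (Z : Set (List A)) (hZ : MinimalRels s t Z)
    (γ : List A) (hγ : IsCycleList s t γ)
    (huseful : ∃ p : A × List A, PairOK s t Z p ∧ RotEquiv (p.2 ++ [p.1]) γ)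
    (hnotstrong : ∃ l, RotEquiv l γ ∧ ¬ InB s t Z l) :
    ∀ g : List A →₀ k,
      (∀ l ∈ g.support, IsCycleList s t l ∧ InB s t Z l ∧ RotEquiv l γ) →
      ∃ f : (A × List A) →₀ k,
        (∀ p ∈ f.support, PairOK s t Z p ∧ RotEquiv (p.2 ++ [p.1]) γ) ∧
          d0map s t Z f = g :=
  d0_restricted_surjective_general s t Z γ hnotstrong
end

section
/- The A–A-bimodule tensor product DA ⊗_{A-A} DA is spanned by the elements α* ⊗ β* with (α,β) ∈ B ⊙ B a cyclic pair (t(β)=s(α) and t(α)=s(β)). Moreover: (i) if (α,β) is not neat then α* ⊗ β* = 0, and (ii) if (α,β) ∼ (γ,δ) under the equivalence relation generated by (aα, β) ∼ (α, βa) and (αb, β) ∼ (α, bβ) for arrows a, b (whenever all paths involved lie in B), then α* ⊗ β* = γ* ⊗ δ*. -/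
namespace Monomial

open Classical

variable {V A : Type*}

/-- The basis of the finite-dimensional monomial algebra `A = kQ/⟨Z⟩`:
a basis element is either a vertex (trivial path) or a nonzero path. -/
def PB (s t : A → V) (Z : Set (List A)) : Type _ :=
  V ⊕ {l : List A // l ≠ [] ∧ InB s t Z l}

/-- Source vertex of a basis element. -/
def srcP (s t : A → V) (Z : Set (List A)) : PB s t Z → V
  | .inl u => u
  | .inr l => s (l.1.head l.2.1)

/-- Target vertex of a basis element. -/
def tgtP (s t : A → V) (Z : Set (List A)) : PB s t Z → V
  | .inl u => u
  | .inr l => t (l.1.getLast l.2.1)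

/-- Underlying list of arrows of a basis element. -/
def toListP (s t : A → V) (Z : Set (List A)) : PB s t Z → List A
  | .inl _ => []
  | .inr l => l.1

/-- The product `p·q` of two basis elements of the monomial algebra (`q` is
applied first); `none` means the product is zero in `A`. -/
noncomputable def comp (s t : A → V) (Z : Set (List A)) :
    PB s t Z → PB s t Z → Option (PB s t Z)
  | .inl u, .inl v => if u = v then some (.inl u) else none
  | .inl u, .inr l => if t (l.1.getLast l.2.1) = u then some (.inr l) else none
  | .inr l, .inl v => if s (l.1.head l.2.1) = v then some (.inr l) else none
  | .inr l, .inr m =>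
      if h : InB s t Z (m.1 ++ l.1) then
        some (.inr ⟨m.1 ++ l.1, fun hc => m.2.1 (List.append_eq_nil_iff.mp hc).1, h⟩)
      else none

variable (s t : A → V) (Z : Set (List A)) (k : Type*) [Field k]

/-- Both `A` and its dual bimodule `DA` are modelled on the space of
`k`-valued functions on the basis `PB s t Z` (for `DA`, the coordinates are
taken in the dual basis `B*`). -/
abbrev MSp := PB s t Z → k

/-- The basis element `γ` of `A`, and at the same time the dual basis element
`γ*` of `DA`. -/
noncomputable def db (γ : PB s t Z) : MSp s t Z k := fun x => if x = γ then 1 else 0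

variable [Fintype (PB s t Z)]

/-- Generic linear map on `MSp` determined by a relation: `f ↦ (x ↦ Σ_{R x γ} f γ)`. -/
noncomputable def sumByRel (R : PB s t Z → PB s t Z → Prop) :
    MSp s t Z k →ₗ[k] MSp s t Z k where
  toFun f x := ∑ γ, if R x γ then f γ else 0
  map_add' f g := by
    funext x
    simp only [Pi.add_apply]
    rw [← Finset.sum_add_distrib]
    exact Finset.sum_congr rfl fun γ _ => by split <;> simp
  map_smul' c f := by
    funext x
    simp only [Pi.smul_apply, smul_eq_mul, RingHom.id_apply]
    rw [Finset.mul_sum]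
    exact Finset.sum_congr rfl fun γ _ => by split <;> simp

/-- The two-sided bimodule action `p·f·q` on `DA`: `(p·f·q)(x) = f(q·x·p)`. -/
noncomputable def actLR (p q : PB s t Z) : MSp s t Z k →ₗ[k] MSp s t Z k :=
  sumByRel s t Z k fun x γ =>
    ((comp s t Z x p).bind fun y => comp s t Z q y) = some γ

/-- The left action `f ↦ p·f` on `DA`: `(p·f)(x) = f(x·p)`. -/
noncomputable def actLin (p : PB s t Z) : MSp s t Z k →ₗ[k] MSp s t Z k :=
  sumByRel s t Z k fun x γ => comp s t Z x p = some γ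

/-- The right action `f ↦ f·p` on `DA`: `(f·p)(x) = f(p·x)`. -/
noncomputable def actRlin (p : PB s t Z) : MSp s t Z k →ₗ[k] MSp s t Z k :=
  sumByRel s t Z k fun x γ => comp s t Z p x = some γ

/-- Left multiplication `y ↦ p·y` on `A`. -/
noncomputable def mulLin (p : PB s t Z) : MSp s t Z k →ₗ[k] MSp s t Z k :=
  sumByRel s t Z k fun r q => comp s t Z p q = some r

/-- Right multiplication `y ↦ y·p` on `A`. -/
noncomputable def mulRlin (p : PB s t Z) : MSp s t Z k →ₗ[k] MSp s t Z k :=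
  sumByRel s t Z k fun r q => comp s t Z q p = some r

variable {s t Z}

/-- `(α, β)` is a cyclic pair: `t(β) = s(α)` and `t(α) = s(β)`. -/
def IsCyclicPairPB (α β : PB s t Z) : Prop :=
  tgtP s t Z β = srcP s t Z α ∧ tgtP s t Z α = srcP s t Z β

/-- A cyclic pair `(α, β) ∈ B ⊙ B` is neat if any arrow extending `β` inside
`B` is the corresponding extremal arrow of `α`, and vice versa. -/
def IsNeatPB (α β : PB s t Z) : Prop :=
  (∀ a : A, t a = srcP s t Z β ∧ InB s t Z (a :: toListP s t Z β) →
    (toListP s t Z α).getLast? = some a) ∧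
  (∀ a : A, s a = tgtP s t Z β ∧ InB s t Z (toListP s t Z β ++ [a]) →
    (toListP s t Z α).head? = some a) ∧
  (∀ b : A, t b = srcP s t Z α ∧ InB s t Z (b :: toListP s t Z α) →
    (toListP s t Z β).getLast? = some b) ∧
  (∀ b : A, s b = tgtP s t Z α ∧ InB s t Z (toListP s t Z α ++ [b]) →
    (toListP s t Z β).head? = some b)

/-- The elementary relation on cyclic pairs in `B ⊙ B`:
`(aα, β) ∼ (α, βa)` and `(αb, β) ∼ (α, bβ)`. -/
def ElemRelPB (p q : PB s t Z × PB s t Z) : Prop :=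
  IsCyclicPairPB p.1 p.2 ∧ IsCyclicPairPB q.1 q.2 ∧
    ((∃ a : A, toListP s t Z p.1 = toListP s t Z q.1 ++ [a] ∧
        toListP s t Z q.2 = a :: toListP s t Z p.2) ∨
     (∃ b : A, toListP s t Z p.1 = b :: toListP s t Z q.1 ∧
        toListP s t Z q.2 = toListP s t Z p.2 ++ [b]))

/-- `N` is a neat equivalence class: an equivalence class of cyclic pairs under
the relation generated by the elementary relations, all of whose members are
neat cyclic pairs. -/
def NeatClass (N : Set (PB s t Z × PB s t Z)) : Prop :=
  ∃ p : PB s t Z × PB s t Z, IsCyclicPairPB p.1 p.2 ∧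
    N = {q | Relation.EqvGen ElemRelPB p q} ∧
    ∀ q ∈ N, IsNeatPB q.1 q.2

variable (s t Z)

/-- `ψ_N(γ*) = Σ_{(γ,δ) ∈ N} δ`, the value of `ψ_N` on a dual basis vector. -/
noncomputable def psiTarget (N : Set (PB s t Z × PB s t Z)) (γ : PB s t Z) :
    MSp s t Z k :=
  fun δ => if (γ, δ) ∈ N then 1 else 0

/-- The linear map `ψ_N : DA → A`. -/
noncomputable def psiLin (N : Set (PB s t Z × PB s t Z)) :
    MSp s t Z k →ₗ[k] MSp s t Z k :=
  sumByRel s t Z k fun δ γ => (γ, δ) ∈ N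

/-- `φ : DA → A` is a morphism of `A–A`-bimodules. -/
def IsBimodMap (φ : MSp s t Z k →ₗ[k] MSp s t Z k) : Prop :=
  ∀ p : PB s t Z,
    φ ∘ₗ actLin s t Z k p = mulLin s t Z k p ∘ₗ φ ∧
    φ ∘ₗ actRlin s t Z k p = mulRlin s t Z k p ∘ₗ φ

/-- The space `Hom_{A-A}(DA, A)` of bimodule morphisms. -/
noncomputable def BimodHoms :
    Submodule k (MSp s t Z k →ₗ[k] MSp s t Z k) where
  carrier := {φ | IsBimodMap s t Z k φ}
  zero_mem' := by
    intro p
    constructor <;> simp [LinearMap.zero_comp, LinearMap.comp_zero]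
  add_mem' := by
    intro a b ha hb p
    exact ⟨by rw [LinearMap.add_comp, LinearMap.comp_add, (ha p).1, (hb p).1],
      by rw [LinearMap.add_comp, LinearMap.comp_add, (ha p).2, (hb p).2]⟩
  smul_mem' := by
    intro c x hx p
    exact ⟨by rw [LinearMap.smul_comp, LinearMap.comp_smul, (hx p).1],
      by rw [LinearMap.smul_comp, LinearMap.comp_smul, (hx p).2]⟩

/-- The space `Alt(DA) = {φ ∈ Hom_{A-A}(DA, A) : φ + φ* = 0}`, where `φ*` is
the transpose of `φ` (in the bases `B*` and `B`): the condition `φ + φ* = 0`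
reads `φ(γ*)_δ + φ(δ*)_γ = 0` for all `γ, δ ∈ B`. -/
noncomputable def AltHoms :
    Submodule k (MSp s t Z k →ₗ[k] MSp s t Z k) where
  carrier := {φ | IsBimodMap s t Z k φ ∧
    ∀ γ δ : PB s t Z, φ (db s t Z k γ) δ + φ (db s t Z k δ) γ = 0}
  zero_mem' := by
    refine ⟨fun p => ?_, fun γ δ => by simp⟩
    constructor <;> simp [LinearMap.zero_comp, LinearMap.comp_zero]
  add_mem' := by
    intro a b ha hb
    refine ⟨fun p => ⟨?_, ?_⟩, fun γ δ => ?_⟩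
    · rw [LinearMap.add_comp, LinearMap.comp_add, (ha.1 p).1, (hb.1 p).1]
    · rw [LinearMap.add_comp, LinearMap.comp_add, (ha.1 p).2, (hb.1 p).2]
    · have h1 := ha.2 γ δ
      have h2 := hb.2 γ δ
      simp only [LinearMap.add_apply, Pi.add_apply]
      linear_combination h1 + h2
  smul_mem' := by
    intro c x hx
    refine ⟨fun p => ⟨?_, ?_⟩, fun γ δ => ?_⟩
    · rw [LinearMap.smul_comp, LinearMap.comp_smul, (hx.1 p).1]
    · rw [LinearMap.smul_comp, LinearMap.comp_smul, (hx.1 p).2]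
    · have h := hx.2 γ δ
      simp only [LinearMap.smul_apply, Pi.smul_apply, smul_eq_mul]
      linear_combination c * h

end Monomial

/-! Each relation comes from balancing `T` against a single basis element `p` of `A`, a vertex
or an arrow, since `p·γ*` and `γ*·p` are either `0` or one dual basis vector. The vertex `s(α)`
fixes `α*` but kills `β*` unless `t(β) = s(α)`, so only cyclic pairs survive. An arrow `a` with
`βa ∈ B` takes `(βa)*` to `β*`, and `α*` to `0` unless `a` is the last arrow of `α`: hence
`α* ⊗ β* = 0` when `(α, β)` fails to be neat at `a`, and `(aα)* ⊗ β* = α* ⊗ (βa)*`. The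
symmetric cases are the same argument applied to `T.flip`, which is balanced as well. -/

namespace Monomial

variable {V A : Type*} {s t : A → V} {Z : Set (List A)}

@[simp] lemma toListP_inl (u : V) : toListP s t Z (.inl u) = [] := rfl
@[simp] lemma toListP_inr (l : {l : List A // l ≠ [] ∧ InB s t Z l}) :
    toListP s t Z (.inr l) = l.1 := rfl
@[simp] lemma srcP_inl (u : V) : srcP s t Z (.inl u) = u := rfl
@[simp] lemma tgtP_inl (u : V) : tgtP s t Z (.inl u) = u := rfl
@[simp] lemma srcP_inr (l : {l : List A // l ≠ [] ∧ InB s t Z l}) :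
    srcP s t Z (.inr l) = s (l.1.head l.2.1) := rfl
@[simp] lemma tgtP_inr (l : {l : List A // l ≠ [] ∧ InB s t Z l}) :
    tgtP s t Z (.inr l) = t (l.1.getLast l.2.1) := rfl

lemma eq_of_toListP_eq {x y : PB s t Z} (hx : toListP s t Z x ≠ [])
    (h : toListP s t Z x = toListP s t Z y) : x = y := by
  rcases x with u | ⟨l, hl⟩ <;> rcases y with v | ⟨m, hm⟩
  · simp at hx
  · simp at hx
  · exact absurd h hl.1
  · simp only [toListP_inr] at h
    subst h
    rfl

lemma eq_of_toListP_eq_of_srcP_eq {x y : PB s t Z}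
    (hl : toListP s t Z x = toListP s t Z y) (hs : srcP s t Z x = srcP s t Z y) : x = y := by
  rcases x with u | ⟨l, hl'⟩
  · rcases y with v | ⟨m, hm⟩
    · exact congrArg Sum.inl hs
    · exact absurd hl.symm hm.1
  · exact eq_of_toListP_eq hl'.1 hl

lemma eq_of_toListP_eq_of_tgtP_eq {x y : PB s t Z}
    (hl : toListP s t Z x = toListP s t Z y) (ht : tgtP s t Z x = tgtP s t Z y) : x = y := by
  rcases x with u | ⟨l, hl'⟩
  · rcases y with v | ⟨m, hm⟩
    · exact congrArg Sum.inl ht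
    · exact absurd hl.symm hm.1
  · exact eq_of_toListP_eq hl'.1 hl

lemma srcP_of_toListP_eq_cons {x : PB s t Z} {a : A} {l : List A}
    (h : toListP s t Z x = a :: l) : srcP s t Z x = s a := by
  rcases x with u | ⟨m, hm⟩
  · simp at h
  · simp only [toListP_inr] at h
    simp [h]

lemma tgtP_of_toListP_eq_concat {x : PB s t Z} {a : A} {l : List A}
    (h : toListP s t Z x = l ++ [a]) : tgtP s t Z x = t a := by
  rcases x with u | ⟨m, hm⟩
  · simp at h
  · simp only [toListP_inr] at h
    simp [h]

lemma toListP_of_comp_eq_some {p q r : PB s t Z} (h : comp s t Z p q = some r) :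
    toListP s t Z r = toListP s t Z q ++ toListP s t Z p := by
  rcases p with u | ⟨l, hl⟩ <;> rcases q with v | ⟨m, hm⟩ <;>
    simp only [comp, Option.ite_none_right_eq_some, Option.dite_none_right_eq_some] at h <;>
    obtain ⟨_, h⟩ := h <;> obtain rfl := Option.some.inj h <;> simp

lemma some_eq_some_iff_toListP_eq {x r : PB s t Z} (hr : toListP s t Z r ≠ []) :
    (some x : Option (PB s t Z)) = some r ↔ toListP s t Z r = toListP s t Z x :=
  Option.some_inj.trans ⟨fun h => h ▸ rfl, fun h => (eq_of_toListP_eq hr h).symm⟩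

lemma comp_eq_some_iff {p q r : PB s t Z} (hr : toListP s t Z r ≠ []) :
    comp s t Z p q = some r ↔
      tgtP s t Z q = srcP s t Z p ∧ toListP s t Z r = toListP s t Z q ++ toListP s t Z p := by
  rcases p with u | ⟨l, hl⟩ <;> rcases q with v | ⟨m, hm⟩ <;>
    simp only [comp, Option.ite_none_right_eq_some, Option.dite_none_right_eq_some]
  · exact iff_of_false (fun ⟨_, h⟩ => hr (by rw [← Option.some.inj h]; rfl))
      fun ⟨_, h⟩ => hr (by simpa using h)
  · exact and_congr Iff.rfl ((some_eq_some_iff_toListP_eq hr).trans (by simp))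
  · exact and_congr eq_comm ((some_eq_some_iff_toListP_eq hr).trans (by simp))
  · constructor
    · rintro ⟨hB, h⟩
      refine ⟨(List.isChain_append.mp hB.1).2.2 _ (List.getLast?_eq_some_getLast hm.1) _
        (List.head?_eq_some_head hl.1), by rw [← Option.some.inj h]; rfl⟩
    · rintro ⟨-, h⟩
      rcases r with u | ⟨r, hr'⟩
      · exact absurd rfl hr
      · simp only [toListP_inr] at h
        subst h
        exact ⟨hr'.2, rfl⟩

lemma comp_inl_right_eq_some_iff {x γ : PB s t Z} {u : V} :
    comp s t Z x (.inl u) = some γ ↔ x = γ ∧ srcP s t Z γ = u := by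
  rcases x with v | l <;> simp only [comp, Option.ite_none_right_eq_some] <;>
  exact ⟨fun ⟨h, e⟩ => by obtain rfl := Option.some.inj e; exact ⟨rfl, h⟩,
    fun ⟨e, h⟩ => by subst e; exact ⟨h, rfl⟩⟩

lemma comp_inl_left_eq_some_iff {x γ : PB s t Z} {u : V} :
    comp s t Z (.inl u) x = some γ ↔ x = γ ∧ tgtP s t Z γ = u := by
  rcases x with v | l <;> simp only [comp, Option.ite_none_right_eq_some]
  · exact ⟨fun ⟨h, e⟩ => by obtain rfl := Option.some.inj e; subst h; exact ⟨rfl, rfl⟩,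
      fun ⟨e, h⟩ => by subst e h; exact ⟨rfl, rfl⟩⟩
  · exact ⟨fun ⟨h, e⟩ => by obtain rfl := Option.some.inj e; exact ⟨rfl, h⟩,
      fun ⟨e, h⟩ => by subst e; exact ⟨h, rfl⟩⟩

lemma inB_singleton (hZ : MinimalRels s t Z) (a : A) : InB s t Z [a] :=
  ⟨List.isChain_singleton a, fun z hz hza => by
    have h₁ := hza.length_le
    have h₂ := (hZ z hz).2.1
    simp only [List.length_singleton] at h₁
    omega⟩

def arrow (hZ : MinimalRels s t Z) (a : A) : PB s t Z :=
  .inr ⟨[a], List.cons_ne_nil a [], inB_singleton hZ a⟩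

section Arrow

variable (hZ : MinimalRels s t Z)

@[simp] lemma toListP_arrow (a : A) : toListP s t Z (arrow hZ a) = [a] := rfl
@[simp] lemma srcP_arrow (a : A) : srcP s t Z (arrow hZ a) = s a := rfl
@[simp] lemma tgtP_arrow (a : A) : tgtP s t Z (arrow hZ a) = t a := rfl

lemma comp_arrow_right_eq_some_iff {a : A} {γ γ' : PB s t Z}
    (hγ' : toListP s t Z γ' = a :: toListP s t Z γ) (hγ : srcP s t Z γ = t a) (x : PB s t Z) :
    comp s t Z x (arrow hZ a) = some γ' ↔ x = γ := by
  rw [comp_eq_some_iff (by simp [hγ']), hγ', tgtP_arrow, toListP_arrow, List.singleton_append,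
    List.cons_inj_right]
  exact ⟨fun ⟨hx, hl⟩ => eq_of_toListP_eq_of_srcP_eq hl.symm (hx.symm.trans hγ.symm),
    fun h => by subst h; exact ⟨hγ.symm, rfl⟩⟩

lemma comp_arrow_left_eq_some_iff {a : A} {γ γ' : PB s t Z}
    (hγ' : toListP s t Z γ' = toListP s t Z γ ++ [a]) (hγ : tgtP s t Z γ = s a) (x : PB s t Z) :
    comp s t Z (arrow hZ a) x = some γ' ↔ x = γ := by
  rw [comp_eq_some_iff (by simp [hγ']), hγ', srcP_arrow, toListP_arrow, List.append_cancel_right_eq]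
  exact ⟨fun ⟨hx, hl⟩ => eq_of_toListP_eq_of_tgtP_eq hl.symm (hx.trans hγ.symm),
    fun h => by subst h; exact ⟨hγ, rfl⟩⟩

lemma head?_toListP_of_comp_arrow_eq_some {a : A} {x γ : PB s t Z}
    (h : comp s t Z x (arrow hZ a) = some γ) : (toListP s t Z γ).head? = some a := by
  simp [toListP_of_comp_eq_some h]

lemma getLast?_toListP_of_arrow_comp_eq_some {a : A} {x γ : PB s t Z}
    (h : comp s t Z (arrow hZ a) x = some γ) : (toListP s t Z γ).getLast? = some a := by
  simp [toListP_of_comp_eq_some h]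

end Arrow

section Balanced

variable {k : Type*} [Field k] [Fintype (PB s t Z)]

omit [Fintype (PB s t Z)] in
lemma db_eq_single [DecidableEq (PB s t Z)] (γ : PB s t Z) : db s t Z k γ = Pi.single γ 1 := by
  funext x
  simp [db, Pi.single_apply]

open Classical in
lemma sumByRel_db_apply (R : PB s t Z → PB s t Z → Prop) (γ x : PB s t Z) :
    sumByRel s t Z k R (db s t Z k γ) x = if R x γ then 1 else 0 := by
  simp only [sumByRel, db, LinearMap.coe_mk, AddHom.coe_mk]
  rw [Finset.sum_eq_single γ (fun y _ hy => by simp [hy]) (by simp)]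
  simp

lemma sumByRel_db_of_iff {R : PB s t Z → PB s t Z → Prop} {γ γ₀ : PB s t Z}
    (h : ∀ x, R x γ ↔ x = γ₀) : sumByRel s t Z k R (db s t Z k γ) = db s t Z k γ₀ := by
  classical
  funext x
  rw [sumByRel_db_apply]
  exact if_congr (h x) rfl rfl

lemma sumByRel_db_of_forall_not {R : PB s t Z → PB s t Z → Prop} {γ : PB s t Z}
    (h : ∀ x, ¬ R x γ) : sumByRel s t Z k R (db s t Z k γ) = 0 := by
  classical
  funext x
  simp [sumByRel_db_apply, h x]

variable {M : Type*} [AddCommGroup M] [Module k M]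

def IsBalanced (T : MSp s t Z k →ₗ[k] MSp s t Z k →ₗ[k] M) : Prop :=
  (∀ p f g, T (actRlin s t Z k p f) g = T f (actLin s t Z k p g)) ∧
    ∀ p f g, T (actLin s t Z k p f) g = T f (actRlin s t Z k p g)

namespace IsBalanced

variable {T : MSp s t Z k →ₗ[k] MSp s t Z k →ₗ[k] M} (hT : IsBalanced T)
include hT

lemma flip : IsBalanced T.flip :=
  ⟨fun p f g => (hT.2 p g f).symm, fun p f g => (hT.1 p g f).symm⟩

lemma apply_db_eq_zero_of_tgtP_ne_srcP {α β : PB s t Z} (h : tgtP s t Z β ≠ srcP s t Z α) :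
    T (db s t Z k α) (db s t Z k β) = 0 := by
  have hα : actLin s t Z k (.inl (srcP s t Z α)) (db s t Z k α) = db s t Z k α :=
    sumByRel_db_of_iff fun _ => comp_inl_right_eq_some_iff.trans (and_iff_left rfl)
  have hβ : actRlin s t Z k (.inl (srcP s t Z α)) (db s t Z k β) = 0 :=
    sumByRel_db_of_forall_not fun _ hx => h (comp_inl_left_eq_some_iff.mp hx).2
  simpa [hα, hβ] using hT.2 (.inl (srcP s t Z α)) (db s t Z k α) (db s t Z k β)

lemma apply_db_eq_zero_of_not_isCyclicPair {α β : PB s t Z} (h : ¬ IsCyclicPairPB α β) :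
    T (db s t Z k α) (db s t Z k β) = 0 := by
  rcases not_and_or.mp h with h | h
  · exact hT.apply_db_eq_zero_of_tgtP_ne_srcP h
  · exact hT.flip.apply_db_eq_zero_of_tgtP_ne_srcP h

lemma eq_zero_of_forall_isCyclicPair
    (h : ∀ α β : PB s t Z, IsCyclicPairPB α β → T (db s t Z k α) (db s t Z k β) = 0) :
    T = 0 := by
  classical
  refine LinearMap.ext_basis (Pi.basisFun k _) (Pi.basisFun k _) fun α β => ?_
  simp only [Pi.basisFun_apply, ← db_eq_single, LinearMap.zero_apply]
  by_cases hc : IsCyclicPairPB α β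
  exacts [h α β hc, hT.apply_db_eq_zero_of_not_isCyclicPair hc]

variable (hZ : MinimalRels s t Z)
include hZ

lemma apply_db_eq_zero_of_inB_cons {α β : PB s t Z} {a : A} (hβ : srcP s t Z β = t a)
    (hB : InB s t Z (a :: toListP s t Z β)) (hα : (toListP s t Z α).getLast? ≠ some a) :
    T (db s t Z k α) (db s t Z k β) = 0 := by
  let β' : PB s t Z := .inr ⟨a :: toListP s t Z β, List.cons_ne_nil _ _, hB⟩
  have hα₀ : actRlin s t Z k (arrow hZ a) (db s t Z k α) = 0 :=
    sumByRel_db_of_forall_not fun _ hx => hα (getLast?_toListP_of_arrow_comp_eq_some hZ hx)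
  have hβ₀ : actLin s t Z k (arrow hZ a) (db s t Z k β') = db s t Z k β :=
    sumByRel_db_of_iff (comp_arrow_right_eq_some_iff hZ rfl hβ)
  simpa [hα₀, hβ₀] using (hT.1 (arrow hZ a) (db s t Z k α) (db s t Z k β')).symm

lemma apply_db_eq_zero_of_inB_concat {α β : PB s t Z} {a : A} (hβ : tgtP s t Z β = s a)
    (hB : InB s t Z (toListP s t Z β ++ [a])) (hα : (toListP s t Z α).head? ≠ some a) :
    T (db s t Z k α) (db s t Z k β) = 0 := by
  let β' : PB s t Z := .inr ⟨toListP s t Z β ++ [a], by simp, hB⟩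
  have hα₀ : actLin s t Z k (arrow hZ a) (db s t Z k α) = 0 :=
    sumByRel_db_of_forall_not fun _ hx => hα (head?_toListP_of_comp_arrow_eq_some hZ hx)
  have hβ₀ : actRlin s t Z k (arrow hZ a) (db s t Z k β') = db s t Z k β :=
    sumByRel_db_of_iff (comp_arrow_left_eq_some_iff hZ rfl hβ)
  simpa [hα₀, hβ₀] using (hT.2 (arrow hZ a) (db s t Z k α) (db s t Z k β')).symm

lemma apply_db_eq_zero_of_not_isNeat {α β : PB s t Z} (h : ¬ IsNeatPB α β) :
    T (db s t Z k α) (db s t Z k β) = 0 := by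
  simp only [IsNeatPB, not_and_or, not_forall] at h
  rcases h with ⟨a, ⟨ha, hB⟩, h⟩ | ⟨a, ⟨ha, hB⟩, h⟩ | ⟨a, ⟨ha, hB⟩, h⟩ | ⟨a, ⟨ha, hB⟩, h⟩
  · exact hT.apply_db_eq_zero_of_inB_cons hZ ha.symm hB h
  · exact hT.apply_db_eq_zero_of_inB_concat hZ ha.symm hB h
  · exact hT.flip.apply_db_eq_zero_of_inB_cons hZ ha.symm hB h
  · exact hT.flip.apply_db_eq_zero_of_inB_concat hZ ha.symm hB h

lemma apply_db_concat_eq_apply_db_cons {α α' β β' : PB s t Z} {a : A}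
    (hα' : toListP s t Z α' = toListP s t Z α ++ [a])
    (hβ' : toListP s t Z β' = a :: toListP s t Z β)
    (hα : tgtP s t Z α = s a) (hβ : srcP s t Z β = t a) :
    T (db s t Z k α') (db s t Z k β) = T (db s t Z k α) (db s t Z k β') := by
  have hα₀ : actRlin s t Z k (arrow hZ a) (db s t Z k α') = db s t Z k α :=
    sumByRel_db_of_iff (comp_arrow_left_eq_some_iff hZ hα' hα)
  have hβ₀ : actLin s t Z k (arrow hZ a) (db s t Z k β') = db s t Z k β :=
    sumByRel_db_of_iff (comp_arrow_right_eq_some_iff hZ hβ' hβ)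
  simpa [hα₀, hβ₀] using (hT.1 (arrow hZ a) (db s t Z k α') (db s t Z k β')).symm

lemma apply_db_eq_of_elemRel {p q : PB s t Z × PB s t Z} (h : ElemRelPB p q) :
    T (db s t Z k p.1) (db s t Z k p.2) = T (db s t Z k q.1) (db s t Z k q.2) := by
  obtain ⟨⟨hp₁, hp₂⟩, ⟨hq₁, hq₂⟩, ⟨a, h₁, h₂⟩ | ⟨a, h₁, h₂⟩⟩ := h
  · exact hT.apply_db_concat_eq_apply_db_cons hZ h₁ h₂
      (hq₂.trans (srcP_of_toListP_eq_cons h₂)) (hp₂.symm.trans (tgtP_of_toListP_eq_concat h₁))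
  · exact (hT.flip.apply_db_concat_eq_apply_db_cons hZ h₂ h₁
      (hp₁.trans (srcP_of_toListP_eq_cons h₁)) (hq₁.symm.trans (tgtP_of_toListP_eq_concat h₂))).symm

lemma apply_db_eq_of_eqvGen {p q : PB s t Z × PB s t Z} (h : Relation.EqvGen ElemRelPB p q) :
    T (db s t Z k p.1) (db s t Z k p.2) = T (db s t Z k q.1) (db s t Z k q.2) :=
  ((InvImage.equivalence _ _ eq_equivalence).eqvGen_iff).mp
    (h.mono fun _ _ => hT.apply_db_eq_of_elemRel hZ)

end IsBalanced

end Balanced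

end Monomial

open Monomial in
/-- `DA ⊗_{A-A} DA` is represented through its universal property: `T` is an arbitrary
`A-A`-balanced bilinear map, i.e. `T(f·a, g) = T(f, a·g)` and `T(a·f, g) = T(f, g·a)` for all
basis elements `a`. -/
theorem tensor_spanning_and_relations {V A k : Type*} [Field k] (s t : A → V)
    (Z : Set (List A)) (hZ : MinimalRels s t Z) [Fintype (PB s t Z)]
    (M : Type*) [AddCommGroup M] [Module k M]
    (T : MSp s t Z k →ₗ[k] MSp s t Z k →ₗ[k] M)
    (hbal₁ : ∀ (p : PB s t Z) (f g : MSp s t Z k),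
      T (actRlin s t Z k p f) g = T f (actLin s t Z k p g))
    (hbal₂ : ∀ (p : PB s t Z) (f g : MSp s t Z k),
      T (actLin s t Z k p f) g = T f (actRlin s t Z k p g)) :
    ((∀ α β : PB s t Z, IsCyclicPairPB α β →
        T (db s t Z k α) (db s t Z k β) = 0) → T = 0) ∧
    (∀ α β : PB s t Z, IsCyclicPairPB α β → ¬ IsNeatPB α β →
      T (db s t Z k α) (db s t Z k β) = 0) ∧
    (∀ p q : PB s t Z × PB s t Z, Relation.EqvGen ElemRelPB p q →
      T (db s t Z k p.1) (db s t Z k p.2) = T (db s t Z k q.1) (db s t Z k q.2)) := by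
  have hT : IsBalanced T := ⟨hbal₁, hbal₂⟩
  exact ⟨hT.eq_zero_of_forall_isCyclicPair,
    fun _ _ _ => hT.apply_db_eq_zero_of_not_isNeat hZ,
    fun _ _ => hT.apply_db_eq_of_eqvGen hZ⟩
end

section
/- Let A = kQ/<Z> be the monomial algebra on the crown quiver: Q_0 = ℤ/5, arrows a_i : i → i+1 for i ∈ ℤ/5, with relations Z = {a_4a_3a_2, a_3a_2a_1}. Then the degree-one Hochschild homology HH_1(A) vanishes (char k = 0). -/
/-!
In the crown quiver a path is an arithmetic progression `v, v+1, v+2, …` in `ℤ/5`. Hence a path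
of length at least 7 passes through the relation `a₃a₂a₁`, while a cycle has length divisible
by 5, so the only cyclic pairs `(a, β)` with `β ∈ B` are `(a₂, a₁a₀a₄a₃)` and `(a₃, a₂a₁a₀a₄)`.
`d₀` sends them to `±` the same cycle, so a `d₀`-cycle is a multiple of their sum, which is
`d₁(a₃a₂a₁, a₀a₄)`.
-/

namespace Monomial

instance {V A : Type*} [DecidableEq V] {s t : A → V} : DecidablePred (IsPath s t) :=
  fun l => inferInstanceAs (Decidable (l.IsChain _))

section Differentials

variable {V A k : Type*} [Field k] (s t : A → V) (Z : Set (List A))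

theorem d0map_eq_sum_of_support_subset {f : (A × List A) →₀ k} {S : Finset (A × List A)}
    (hS : f.support ⊆ S) : d0map s t Z f = ∑ p ∈ S, f p • d0b s t Z k p :=
  Finsupp.sum_of_support_subset f hS _ fun _ _ => zero_smul k _

theorem d1map_single (α β : List A) (c : k) :
    d1map s t Z (Finsupp.single (α, β) c) = c • d1b s t Z k α β :=
  Finsupp.sum_single_index (zero_smul k _)

end Differentials

section SuccQuiver

theorem IsPath.getElem_eq_add {R : Type*} [AddMonoidWithOne R] {l : List R}
    (h : IsPath id (· + 1) l) (i : ℕ) (hi : i < l.length) :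
    l[i] = l[0] + (i : R) := by
  induction i with
  | zero => simp
  | succ n ih =>
    have step : l[n] + 1 = l[n + 1] := List.isChain_iff_getElem.mp h n hi
    rw [← step, ih (by omega), Nat.cast_succ, add_assoc]

theorem IsCycleList.natCast_length_eq_zero {R : Type*} [AddGroupWithOne R] {l : List R}
    (h : IsCycleList id (· + 1) l) : (l.length : R) = 0 := by
  obtain ⟨hne, hpath, hcyc⟩ := h
  have hlen : 0 < l.length := List.length_pos_iff.mpr hne
  rw [tgtOf, srcOf, List.getLast?_eq_some_getLast hne, List.head?_eq_some_head hne,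
    Option.map_some, Option.map_some, Option.some_inj, List.getLast_eq_getElem,
    List.head_eq_getElem, hpath.getElem_eq_add _ (by omega), id, Nat.cast_pred hlen] at hcyc
  rwa [add_assoc, sub_add_cancel, add_eq_left] at hcyc

theorem IsPath.infix_of_length_le {n : ℕ} [NeZero n] {w l : List (ZMod n)}
    (hw : IsPath id (· + 1) w) (hl : IsPath id (· + 1) l) (hw_ne : w ≠ [])
    (hlen : n + w.length ≤ l.length + 1) : w <:+: l := by
  have hw₀ : 0 < w.length := List.length_pos_iff.mpr hw_ne
  have hn : 0 < n := Nat.pos_of_ne_zero (NeZero.ne n)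
  set i := (w[0] - l[0]'(by omega)).val
  have hi : i < n := ZMod.val_lt _
  have hwindow : (l.drop i).take w.length = w := by
    refine List.ext_getElem (by simp; omega) fun j h₁ h₂ => ?_
    simp only [List.getElem_take, List.getElem_drop]
    rw [hl.getElem_eq_add _ (by simp at h₁; omega), hw.getElem_eq_add, Nat.cast_add,
      ZMod.natCast_val, ZMod.cast_id', id]
    ring
  rw [← hwindow]
  exact (List.take_prefix _ _).isInfix.trans (List.drop_suffix _ _).isInfix

theorem IsPath.eq_map_range {R : Type*} [AddMonoidWithOne R] {l : List R}
    (h : IsPath id (· + 1) l) :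
    l = (List.range l.length).map fun i : ℕ => l.headD 0 + (i : R) := by
  refine List.ext_getElem (by simp) fun i h₁ _ => ?_
  rw [h.getElem_eq_add, List.getElem_map, List.getElem_range]
  cases l with
  | nil => simp at h₁
  | cons a l => rfl

end SuccQuiver

section Crown

abbrev crownRels : Set (List (ZMod 5)) := {[1, 2, 3], [2, 3, 4]}

theorem inB_crownRels_iff {l : List (ZMod 5)} :
    InB id (· + 1) crownRels l ↔
      IsPath id (· + 1) l ∧ ¬ [1, 2, 3] <:+: l ∧ ¬ [2, 3, 4] <:+: l := by
  simp [InB]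

instance : DecidablePred (InB id (· + 1) crownRels) :=
  fun _ => decidable_of_iff _ inB_crownRels_iff.symm

theorem InB.length_le_six {l : List (ZMod 5)} (h : InB id (· + 1) crownRels l) :
    l.length ≤ 6 := by
  by_contra! hlen
  exact h.2 [1, 2, 3] (by simp) <|
    IsPath.infix_of_length_le (by decide) h.1 (by simp) (by simp; omega)

theorem PairOK.crown_cases {p : ZMod 5 × List (ZMod 5)} (h : PairOK id (· + 1) crownRels p) :
    p = (2, [3, 4, 0, 1]) ∨ p = (3, [4, 0, 1, 2]) := by
  obtain ⟨a, β⟩ := p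
  obtain ⟨hβ, hcyc⟩ := h
  dsimp only at hβ hcyc
  have hlen : (β ++ [a]).length = 5 := by
    have h5 := (ZMod.natCast_eq_zero_iff _ _).mp hcyc.natCast_length_eq_zero
    have := hβ.length_le_six
    simp only [List.length_append, List.length_singleton] at h5 ⊢
    omega
  have hwalk := hcyc.2.1.eq_map_range
  rw [hlen] at hwalk
  generalize (β ++ [a]).headD 0 = v at hwalk
  have hβ' : β = ((List.range 5).map fun i : ℕ => v + (i : ZMod 5)).dropLast := by
    rw [← hwalk, List.dropLast_concat]
  have ha : some a = ((List.range 5).map fun i : ℕ => v + (i : ZMod 5)).getLast? := by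
    rw [← hwalk, List.getLast?_concat]
  replace hβ := (inB_crownRels_iff.mp hβ).2
  subst hβ'
  clear hcyc hlen hwalk
  revert v a
  decide

variable {k : Type*} [Field k]

theorem d0b_crown_two :
    d0b id (· + 1) crownRels k (2, [3, 4, 0, 1]) = Finsupp.single [3, 4, 0, 1, 2] 1 := by
  rw [d0b, if_pos (by decide), if_neg (by decide), sub_zero]
  rfl

theorem d0b_crown_three :
    d0b id (· + 1) crownRels k (3, [4, 0, 1, 2]) = -Finsupp.single [3, 4, 0, 1, 2] 1 := by
  rw [d0b, if_neg (by decide), if_pos (by decide), zero_sub]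

theorem zPairOK_crown : ZPairOK id (· + 1) crownRels ([1, 2, 3], [4, 0]) :=
  ⟨by simp, by decide, by simp, by decide, rfl⟩

theorem d1b_crown : d1b id (· + 1) crownRels k [1, 2, 3] [4, 0] =
    Finsupp.single (2, [3, 4, 0, 1]) 1 + Finsupp.single (3, [4, 0, 1, 2]) 1 := by
  simp +decide [d1b, bAt, Finset.sum_range_succ]

end Crown

end Monomial

open Monomial in
/-- The arrow `aᵢ` is encoded by its source `i`, and the relations `a₃a₂a₁`, `a₄a₃a₂` by the
lists `[1, 2, 3]`, `[2, 3, 4]` of their arrows in traversal order. -/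
theorem HH1_crown5_vanishes_general {k : Type*} [Field k]
    (s t : ZMod 5 → ZMod 5) (hs : s = id) (ht : t = fun i => i + 1)
    (Z : Set (List (ZMod 5))) (hZ : Z = {[1, 2, 3], [2, 3, 4]}) :
    ∀ f : (ZMod 5 × List (ZMod 5)) →₀ k,
      (∀ p ∈ f.support, PairOK s t Z p) →
      d0map s t Z f = 0 →
      ∃ g : (List (ZMod 5) × List (ZMod 5)) →₀ k,
        (∀ q ∈ g.support, ZPairOK s t Z q) ∧ d1map s t Z g = f := by
  subst hs ht hZ
  intro f hf hd0
  have hsupp : f.support ⊆ {(2, [3, 4, 0, 1]), (3, [4, 0, 1, 2])} := fun p hp => by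
    simpa using (hf p hp).crown_cases
  have hcoef : f (2, [3, 4, 0, 1]) = f (3, [4, 0, 1, 2]) := by
    have h := congr($hd0 [3, 4, 0, 1, 2])
    rw [d0map_eq_sum_of_support_subset _ _ _ hsupp, Finset.sum_pair (by decide), d0b_crown_two,
      d0b_crown_three] at h
    simpa [← sub_eq_add_neg, sub_eq_zero] using h
  refine ⟨Finsupp.single ([1, 2, 3], [4, 0]) (f (2, [3, 4, 0, 1])), fun q hq => ?_, ?_⟩
  · rw [Finset.mem_singleton.mp (Finsupp.support_single_subset hq)]
    exact zPairOK_crown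
  · conv_rhs => rw [← Finsupp.sum_single f, Finsupp.sum_of_support_subset f hsupp _ (by simp),
      Finset.sum_pair (by decide), ← hcoef]
    rw [d1map_single, d1b_crown, smul_add, Finsupp.smul_single_one, Finsupp.smul_single_one]

open Monomial in
/-- for the monomial algebra on the crown quiver with vertices
`ℤ/5`, arrows `aᵢ : i → i+1` (the arrow `aᵢ` is encoded by its source `i`, so
`s = id`, `t = (·+1)`), and relations `Z = {a₄a₃a₂, a₃a₂a₁}` (the lists
`[2,3,4]` and `[1,2,3]` in traversal order), the first Hochschild homology
`HH₁(A)` vanishes in characteristic zero: every element of `k(Q₁ ⊙ B)` killed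
by `d₀` lies in the image under `d₁` of `k(Z ⊙ B)`. -/
theorem HH1_crown5_vanishes {k : Type*} [Field k] [CharZero k]
    (s t : ZMod 5 → ZMod 5) (hs : s = id) (ht : t = fun i => i + 1)
    (Z : Set (List (ZMod 5))) (hZ : Z = {[1, 2, 3], [2, 3, 4]}) :
    ∀ f : (ZMod 5 × List (ZMod 5)) →₀ k,
      (∀ p ∈ f.support, PairOK s t Z p) →
      d0map s t Z f = 0 →
      ∃ g : (List (ZMod 5) × List (ZMod 5)) →₀ k,
        (∀ q ∈ g.support, ZPairOK s t Z q) ∧ d1map s t Z g = f :=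
  HH1_crown5_vanishes_general s t hs ht Z hZ
end

section
/- Let n > 1, m > 1 and let A = kQ/<Z> be the monomial algebra of the crown Q_0 = ℤ/n, arrows a_i : i → i+1, with the single relation Z = {a_0 γ^{m-1}}, where γ = β a_0 = a_{n-1}...a_1 a_0 with β = a_{n-1}...a_1. Then the set of nontrivial circuits of Q is {C_i = class of γ^i : i > 0}; the circuits C_i for 0 < i < m are exactly the nontrivial strong circuits, C_m is the unique efficient circuit, and the multiplicity of C_i is i. -/
namespace CrownProof
open Monomial

variable {n : ℕ}

def pf (v : ZMod n) (L : ℕ) : List (ZMod n) :=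
  (List.range L).map (fun j : ℕ => v + (j : ZMod n))

@[simp] lemma length_pf (v : ZMod n) (L : ℕ) : (pf v L).length = L := by simp [pf]

@[simp] lemma getElem_pf (v : ZMod n) (L j : ℕ) (h : j < (pf v L).length) :
    (pf v L)[j] = v + (j : ZMod n) := by simp [pf]

lemma pf_ne_nil (v : ZMod n) {L : ℕ} (hL : 0 < L) : pf v L ≠ [] := by
  intro h
  have h2 := length_pf v L
  rw [h] at h2; simp at h2; omega

lemma pf_isPath (v : ZMod n) (L : ℕ) :
    IsPath (id : ZMod n → ZMod n) (fun i => i + 1) (pf v L) := by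
  rw [IsPath, List.Chain', List.isChain_iff_getElem]
  intro i h
  simp only [List.get_eq_getElem, getElem_pf, id_eq]
  push_cast
  ring

lemma path_getElem {l : List (ZMod n)}
    (hl : IsPath (id : ZMod n → ZMod n) (fun i => i + 1) l) :
    ∀ j (h : j < l.length) (h0 : 0 < l.length), l[j] = l[0] + (j : ZMod n) := by
  intro j
  induction j with
  | zero => intro h h0; simp
  | succ j ih =>
      intro h h0
      rw [IsPath, List.Chain', List.isChain_iff_getElem] at hl
      have h2 := hl j (by omega)
      simp only [List.get_eq_getElem, id_eq] at h2
      have hj := ih (by omega) h0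
      rw [← h2, hj]
      push_cast
      ring

lemma path_eq_pf {l : List (ZMod n)}
    (hl : IsPath (id : ZMod n → ZMod n) (fun i => i + 1) l) (hne : l ≠ []) :
    l = pf (l[0]'(List.length_pos_iff.mpr hne)) l.length := by
  apply List.ext_getElem (by simp)
  intro j h1 h2
  rw [getElem_pf, path_getElem hl j h1 (List.length_pos_iff.mpr hne)]

lemma pf_append (v : ZMod n) (L1 L2 : ℕ) :
    pf v L1 ++ pf (v + (L1 : ZMod n)) L2 = pf v (L1 + L2) := by
  rw [pf, pf, pf, List.range_add, List.map_append, List.map_map]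
  congr 1
  apply List.map_congr_left
  intro a _
  simp only [Function.comp]
  push_cast
  ring

@[simp] lemma pf_one (v : ZMod n) : pf v 1 = [v] := by
  have h : List.range 1 = [0] := rfl
  rw [pf, h]
  simp

lemma take_pf (v : ZMod n) (L q : ℕ) : (pf v L).take q = pf v (min q L) := by
  rw [pf, pf, ← List.map_take, List.take_range]

lemma drop_pf (v : ZMod n) (L p : ℕ) :
    (pf v L).drop p = pf (v + (p : ZMod n)) (L - p) := by
  apply List.ext_getElem (by simp)
  intro j h1 h2
  rw [List.getElem_drop, getElem_pf, getElem_pf]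
  push_cast
  ring

lemma rotate_pf (v : ZMod n) (L r : ℕ) (hL : n ∣ L) :
    (pf v L).rotate r = pf (v + (r : ZMod n)) L := by
  apply List.ext_getElem (by simp)
  intro j h1 h2
  rw [List.getElem_rotate, getElem_pf, getElem_pf]
  have key : (((j + r) % L : ℕ) : ZMod n) = ((j + r : ℕ) : ZMod n) := by
    conv_rhs => rw [← Nat.mod_add_div (j + r) L]
    obtain ⟨c, rfl⟩ := hL
    push_cast
    simp [ZMod.natCast_self]
  simp only [length_pf]
  rw [key]
  push_cast
  ring

lemma head?_pf (v : ZMod n) {L : ℕ} (hL : 0 < L) : (pf v L).head? = some v := by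
  rw [List.head?_eq_getElem?, List.getElem?_eq_getElem (by simp [hL]), getElem_pf]
  simp

lemma getLast?_pf (v : ZMod n) {L : ℕ} (hL : 0 < L) :
    (pf v L).getLast? = some (v + ((L - 1 : ℕ) : ZMod n)) := by
  rw [List.getLast?_eq_getElem?, List.getElem?_eq_getElem (by simp; omega)]
  simp

lemma cast_pred_add_one {L : ℕ} (hL : 0 < L) :
    ((L - 1 : ℕ) : ZMod n) + 1 = (L : ZMod n) := by
  have h1 : L - 1 + 1 = L := by omega
  calc ((L - 1 : ℕ) : ZMod n) + 1 = ((L - 1 + 1 : ℕ) : ZMod n) := by push_cast; ring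
    _ = (L : ZMod n) := by rw [h1]

lemma isCycle_pf_iff (v : ZMod n) (L : ℕ) :
    IsCycleList (id : ZMod n → ZMod n) (fun i => i + 1) (pf v L) ↔
      0 < L ∧ (L : ZMod n) = 0 := by
  constructor
  · rintro ⟨hne, -, hc⟩
    have hL : 0 < L := by
      by_contra h
      exact hne (by interval_cases L; rfl)
    refine ⟨hL, ?_⟩
    rw [tgtOf, srcOf, getLast?_pf v hL, head?_pf v hL] at hc
    simp only [Option.map_some, Option.some.injEq, id_eq] at hc
    have h2 : v + (L : ZMod n) = v + 0 := by
      rw [add_zero, ← cast_pred_add_one hL, ← add_assoc, hc]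
    exact add_left_cancel h2
  · rintro ⟨hL, hcast⟩
    refine ⟨pf_ne_nil v hL, pf_isPath v L, ?_⟩
    rw [tgtOf, srcOf, getLast?_pf v hL, head?_pf v hL]
    simp only [Option.map_some, Option.some.injEq, id_eq]
    rw [add_assoc, cast_pred_add_one hL, hcast, add_zero]


end CrownProof

namespace CrownProof
open Monomial
variable {n : ℕ}

lemma infix_pf_iff {K : ℕ} (hK : 0 < K) (w v : ZMod n) (L : ℕ) :
    pf w K <:+: pf v L ↔ ∃ p, p + K ≤ L ∧ v + ((p : ℕ) : ZMod n) = w := by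
  constructor
  · rintro ⟨u, x, h⟩
    have hlen : u.length + (K + x.length) = L := by
      have h2 := congrArg List.length h
      simp only [List.length_append, length_pf] at h2
      omega
    refine ⟨u.length, by omega, ?_⟩
    have hd : (pf v L).drop u.length = pf w K ++ x := by
      rw [← h, List.append_assoc, List.drop_left]
    rw [drop_pf] at hd
    have ht2 : (pf (v + (u.length : ZMod n)) (L - u.length)).take K
        = (pf w K ++ x).take K := by rw [hd]
    rw [take_pf, List.take_left' (length_pf w K)] at ht2
    have hmin : min K (L - u.length) = K := by omega
    rw [hmin] at ht2
    have h0 := congrArg (fun l : List (ZMod n) => l[0]?) ht2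
    simp only [List.getElem?_eq_getElem (by simp [hK] : 0 < (pf (v + (u.length : ZMod n)) K).length),
      List.getElem?_eq_getElem (by simp [hK] : 0 < (pf w K).length), getElem_pf] at h0
    simpa using h0
  · rintro ⟨p, hpK, hvp⟩
    refine ⟨pf v p, pf (w + ((K : ℕ) : ZMod n)) (L - p - K), ?_⟩
    rw [← hvp]
    have e1 : pf (v + (p : ZMod n)) K ++ pf (v + (p : ZMod n) + (K : ZMod n)) (L - p - K)
        = pf (v + (p : ZMod n)) (K + (L - p - K)) := pf_append _ _ _
    rw [List.append_assoc, e1, pf_append]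
    congr 1
    omega

lemma inB_pf_iff {K : ℕ} (hK : 0 < K) (v : ZMod n) (L : ℕ) :
    InB (id : ZMod n → ZMod n) (fun i => i + 1) {pf (0 : ZMod n) K} (pf v L) ↔
      ∀ p : ℕ, p + K ≤ L → v + (p : ZMod n) ≠ 0 := by
  rw [InB]
  constructor
  · rintro ⟨-, h⟩ p hp hvp
    exact h (pf 0 K) rfl ((infix_pf_iff hK 0 v L).mpr ⟨p, hp, hvp⟩)
  · intro h
    refine ⟨pf_isPath v L, ?_⟩
    rintro z rfl hinf
    obtain ⟨p, hp, hvp⟩ := (infix_pf_iff hK 0 v L).mp hinf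
    exact h p hp hvp

lemma rotEquiv_pf_iff (hn : 1 < n) {M : ℕ} (hM : n ∣ M) (l : List (ZMod n)) :
    RotEquiv l (pf (0 : ZMod n) M) ↔ ∃ w, l = pf w M := by
  haveI : NeZero n := ⟨by omega⟩
  constructor
  · rintro ⟨r, hr⟩
    rw [List.rotate_eq_iff] at hr
    refine ⟨((0 : ZMod n) + ((pf (0:ZMod n) M).length - r % (pf (0:ZMod n) M).length : ℕ)), ?_⟩
    rw [hr, rotate_pf _ _ _ hM]
  · rintro ⟨w, rfl⟩
    refine ⟨n - w.val, ?_⟩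
    rw [rotate_pf _ _ _ hM]
    congr 1
    have hv : w.val ≤ n := le_of_lt (ZMod.val_lt w)
    rw [Nat.cast_sub hv, ZMod.natCast_self, ZMod.natCast_rightInverse w]
    ring

end CrownProof


open CrownProof

open Monomial in
/-- for the crown quiver with vertices `ℤ/n` (`n > 1`), arrows
`aᵢ : i → i+1` (encoded by their source, `s = id`, `t = (·+1)`), and the single
relation `Z = {a₀γ^{m-1}}` (`m > 1`), where `γ = βa₀` with `β = a_{n-1}…a₁`
(so `γ` is the list `[0,1,…,n-1]` in traversal order):
every nontrivial circuit is the rotation class `Cᵢ` of `γ^i` for some `i > 0`;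
`Cᵢ` is strong exactly when `0 < i < m`; `Cᵢ` is efficient exactly when
`i = m`; and `Cᵢ` has period `n`, length `i·n`, hence multiplicity `i`. -/
theorem crown_circuits {n m : ℕ} (hn : 1 < n) (hm : 1 < m)
    (s t : ZMod n → ZMod n) (hs : s = id) (ht : t = fun i => i + 1)
    (γl : List (ZMod n)) (hγl : γl = (List.range n).map (Nat.cast : ℕ → ZMod n))
    (gi : ℕ → List (ZMod n)) (hgi : gi = fun i => (List.replicate i γl).flatten)
    (Z : Set (List (ZMod n))) (hZ : Z = {(List.replicate (m - 1) γl).flatten ++ [(0 : ZMod n)]}) :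
    (∀ i, 0 < i → IsCycleList s t (gi i)) ∧
    (∀ l, IsCycleList s t l → ∃ i, 0 < i ∧ RotEquiv l (gi i)) ∧
    (∀ i, 0 < i → ((∀ l, RotEquiv l (gi i) → InB s t Z l) ↔ i < m)) ∧
    (∀ i, 0 < i →
      (((∃ p : ZMod n × List (ZMod n), PairOK s t Z p ∧ RotEquiv (p.2 ++ [p.1]) (gi i)) ∧
        (∃ l, RotEquiv l (gi i) ∧ ¬ InB s t Z l) ∧
        (∃ q : List (ZMod n) × List (ZMod n), ZPairOK s t Z q ∧ RotEquiv (q.2 ++ q.1) (gi i)))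
        ↔ i = m)) ∧
    (∀ i, 0 < i → (gi i).length = i * n ∧ (gi i).rotate n = gi i ∧
      ∀ j, 0 < j → j < n → (gi i).rotate j ≠ gi i) := by
  haveI : NeZero n := ⟨by omega⟩
  subst hs ht hγl
  have hnpos : 0 < n := by omega
  set K := (m - 1) * n + 1 with hKdef
  have hKpos : 0 < K := by omega
  have hXn : (m - 1) * n + n = m * n := by
    have h1 : m - 1 + 1 = m := by omega
    calc (m - 1) * n + n = (m - 1 + 1) * n := by ring
      _ = m * n := by rw [h1]
  have hγ : (List.range n).map (Nat.cast : ℕ → ZMod n) = pf (0 : ZMod n) n := by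
    rw [pf]
    apply List.map_congr_left
    intro a _
    rw [zero_add]
  have hrep : ∀ i : ℕ, (List.replicate i ((List.range n).map (Nat.cast : ℕ → ZMod n))).flatten
      = pf (0 : ZMod n) (i * n) := by
    intro i
    induction i with
    | zero => simp [pf]
    | succ i ih =>
        rw [List.replicate_succ, List.flatten_cons, ih, hγ]
        have h2 : pf (0 : ZMod n) (i * n) = pf ((0 : ZMod n) + (n : ZMod n)) (i * n) := by
          rw [ZMod.natCast_self, add_zero]
        rw [h2, pf_append]
        congr 1
        ring
  have hgil : ∀ i : ℕ, gi i = pf (0 : ZMod n) (i * n) := by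
    intro i
    rw [hgi]
    exact hrep i
  have hcastmul : ∀ i : ℕ, ((i * n : ℕ) : ZMod n) = 0 := fun i =>
    (ZMod.natCast_eq_zero_iff (i * n) n).mpr (dvd_mul_left n i)
  have hZ2 : Z = {pf (0 : ZMod n) K} := by
    rw [hZ]
    rw [hrep (m - 1)]
    have h2 : [(0 : ZMod n)] = pf ((0 : ZMod n) + (((m - 1) * n : ℕ) : ZMod n)) 1 := by
      rw [hcastmul (m - 1), add_zero, pf_one]
    rw [h2, pf_append]
  clear hgi hZ
  -- helper: if i < m then every rotation of gi i is in B
  have hsmallB : ∀ i : ℕ, 0 < i → i < m → ∀ l, RotEquiv l (gi i) → InB id (fun x => x + 1) Z l := by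
    intro i hi him l hrot
    rw [hgil] at hrot
    obtain ⟨w, rfl⟩ := (rotEquiv_pf_iff hn (dvd_mul_left n i) l).mp hrot
    rw [hZ2, inB_pf_iff hKpos]
    intro p hp
    exfalso
    have h3 : i * n ≤ (m - 1) * n := Nat.mul_le_mul_right n (by omega)
    set X := (m - 1) * n
    set Y := i * n
    omega
  -- helper: if m ≤ i then gi i is not in B
  have hbigB : ∀ i : ℕ, m ≤ i → ¬ InB id (fun x => x + 1) Z (gi i) := by
    intro i him hB
    rw [hgil, hZ2, inB_pf_iff hKpos] at hB
    have h3 : m * n ≤ i * n := Nat.mul_le_mul_right n (by omega)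
    refine hB 0 ?_ (by simp)
    set X := (m - 1) * n
    set Y := i * n
    set W := m * n
    omega
  refine ⟨?_, ?_, ?_, ?_, ?_⟩
  · -- C1
    intro i hi
    rw [hgil, isCycle_pf_iff]
    exact ⟨Nat.mul_pos hi hnpos, hcastmul i⟩
  · -- C2
    intro l hl
    obtain ⟨hne, hp, hc⟩ := hl
    have hl0 : 0 < l.length := List.length_pos_iff.mpr hne
    have he := path_eq_pf hp hne
    have hcyc : IsCycleList (id : ZMod n → ZMod n) (fun x => x + 1)
        (pf (l[0]'hl0) l.length) := he ▸ ⟨hne, hp, hc⟩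
    obtain ⟨-, hcast⟩ := (isCycle_pf_iff _ _).mp hcyc
    obtain ⟨i, hil⟩ := (ZMod.natCast_eq_zero_iff l.length n).mp hcast
    have hipos : 0 < i := by
      rcases Nat.eq_zero_or_pos i with h | h
      · subst h; rw [Nat.mul_zero] at hil; omega
      · exact h
    refine ⟨i, hipos, ?_⟩
    rw [hgil]
    refine (rotEquiv_pf_iff hn (dvd_mul_left n i) l).mpr ⟨l[0]'hl0, ?_⟩
    rw [mul_comm i n, ← hil]
    exact he
  · -- C3
    intro i hi
    constructor
    · intro hall
      by_contra hge
      push_neg at hge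
      exact hbigB i hge (hall (gi i) ⟨0, List.rotate_zero _⟩)
    · intro him
      exact hsmallB i hi him
  · -- C4
    intro i hi
    constructor
    · rintro ⟨⟨p, ⟨hpB, hpcyc⟩, hprot⟩, ⟨l, hlrot, hlnB⟩, -⟩
      have hmi : m ≤ i := by
        by_contra h
        push_neg at h
        exact hlnB (hsmallB i hi h l hlrot)
      have him : i ≤ m := by
        by_contra h
        push_neg at h
        rw [hgil] at hprot
        obtain ⟨w, hw⟩ := (rotEquiv_pf_iff hn (dvd_mul_left n i) _).mp hprot
        have hlen2 : p.2.length = i * n - 1 := by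
          have h2 := congrArg List.length hw
          simp only [List.length_append, List.length_cons, List.length_nil, length_pf] at h2
          omega
        have hp2 : p.2 = pf w (i * n - 1) := by
          have h2 := congrArg (List.take (i * n - 1)) hw
          rw [← hlen2, List.take_left, hlen2, take_pf] at h2
          rw [h2]
          congr 1
          omega
        rw [hp2, hZ2, inB_pf_iff hKpos] at hpB
        have hv : w.val < n := ZMod.val_lt w
        have hwz : w + ((n - w.val : ℕ) : ZMod n) = 0 := by
          rw [Nat.cast_sub (le_of_lt hv), ZMod.natCast_self, ZMod.natCast_rightInverse w]
          ring
        refine hpB (n - w.val) ?_ hwz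
        have h3 : (m + 1) * n ≤ i * n := Nat.mul_le_mul_right n (by omega)
        have h4 : (m - 1) * n + 2 * n = (m + 1) * n := by
          have h5 : m - 1 + 2 = m + 1 := by omega
          calc (m - 1) * n + 2 * n = (m - 1 + 2) * n := by ring
            _ = (m + 1) * n := by rw [h5]
        set X := (m - 1) * n
        set Y := i * n
        set W := (m + 1) * n
        omega
      omega
    · intro heq
      rw [heq]
      have hmn1 : 0 < m * n := Nat.mul_pos (by omega) hnpos
      have hc1 : (1 : ZMod n) + ((m * n - 1 : ℕ) : ZMod n) = 0 := by
        rw [add_comm, cast_pred_add_one hmn1, hcastmul m]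
      have hc2 : (1 : ZMod n) + ((n - 1 : ℕ) : ZMod n) = 0 := by
        rw [add_comm, cast_pred_add_one hnpos, ZMod.natCast_self]
      have hpfm : pf (1 : ZMod n) (m * n - 1) ++ [(0 : ZMod n)] = pf (1 : ZMod n) (m * n) := by
        have h2 : [(0 : ZMod n)] = pf ((1 : ZMod n) + ((m * n - 1 : ℕ) : ZMod n)) 1 := by
          rw [hc1, pf_one]
        rw [h2, pf_append]
        congr 1
        omega
      have hrot1 : RotEquiv (pf (1 : ZMod n) (m * n)) (gi m) := by
        rw [hgil]
        exact (rotEquiv_pf_iff hn (dvd_mul_left n m) _).mpr ⟨1, rfl⟩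
      refine ⟨⟨((0 : ZMod n), pf (1 : ZMod n) (m * n - 1)), ⟨⟨?_, ?_⟩, ?_⟩⟩, ?_, ?_⟩
      · -- InB p.2
        rw [hZ2, inB_pf_iff hKpos]
        intro q hq h0
        have hq2 : q + 1 < n := by
          set X := (m - 1) * n
          set Y := m * n
          omega
        have h4 : ((q + 1 : ℕ) : ZMod n) = 0 := by
          push_cast
          linear_combination h0
        have h5 := (ZMod.natCast_eq_zero_iff (q + 1) n).mp h4
        have := Nat.le_of_dvd (by omega) h5
        omega
      · -- cycle
        show IsCycleList _ _ (pf (1 : ZMod n) (m * n - 1) ++ [(0 : ZMod n)])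
        rw [hpfm, isCycle_pf_iff]
        exact ⟨hmn1, hcastmul m⟩
      · -- RotEquiv
        show RotEquiv (pf (1 : ZMod n) (m * n - 1) ++ [(0 : ZMod n)]) (gi m)
        rw [hpfm]
        exact hrot1
      · -- (b)
        refine ⟨gi m, ⟨0, List.rotate_zero _⟩, hbigB m le_rfl⟩
      · -- (c)
        have hpfc : pf (1 : ZMod n) (n - 1) ++ pf (0 : ZMod n) K = pf (1 : ZMod n) (m * n) := by
          have h2 : pf (0 : ZMod n) K = pf ((1 : ZMod n) + ((n - 1 : ℕ) : ZMod n)) K := by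
            rw [hc2]
          rw [h2, pf_append]
          congr 1
          set X := (m - 1) * n
          set Y := m * n
          omega
        refine ⟨(pf (0 : ZMod n) K, pf (1 : ZMod n) (n - 1)), ⟨?_, ⟨?_, ?_⟩⟩, ?_⟩
        · rw [hZ2]; rfl
        · rw [hZ2, inB_pf_iff hKpos]
          intro q hq
          exfalso
          have h3 : n ≤ (m - 1) * n := Nat.le_mul_of_pos_left n (by omega)
          set X := (m - 1) * n
          omega
        · show IsCycleList _ _ (pf (1 : ZMod n) (n - 1) ++ pf (0 : ZMod n) K)
          rw [hpfc, isCycle_pf_iff]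
          exact ⟨hmn1, hcastmul m⟩
        · show RotEquiv (pf (1 : ZMod n) (n - 1) ++ pf (0 : ZMod n) K) (gi m)
          rw [hpfc]
          exact hrot1
  · -- C5
    intro i hi
    have hil : 0 < i * n := Nat.mul_pos hi hnpos
    refine ⟨by rw [hgil]; simp, ?_, ?_⟩
    · rw [hgil, rotate_pf _ _ _ (dvd_mul_left n i)]
      rw [ZMod.natCast_self, add_zero]
    · intro j hj0 hjn hEq
      rw [hgil, rotate_pf _ _ _ (dvd_mul_left n i)] at hEq
      have h0 := congrArg (fun l : List (ZMod n) => l[0]?) hEq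
      simp only [List.getElem?_eq_getElem (by simp [hil] : 0 < (pf ((0:ZMod n) + (j:ZMod n)) (i*n)).length),
        List.getElem?_eq_getElem (by simp [hil] : 0 < (pf (0:ZMod n) (i*n)).length),
        getElem_pf] at h0
      simp only [Nat.cast_zero, add_zero, zero_add, Option.some.injEq] at h0
      have h5 := (ZMod.natCast_eq_zero_iff j n).mp h0
      have := Nat.le_of_dvd hj0 h5
      omega
end
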